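/- arXiv:2507.05793 — 3 statements merged into one kernel-verified Lean document; each statement's English description precedes it below -/
import Mathlib

section
/- Time reversal of the h-process: with {Y_n} the h-process with initial distribution μ_h and L the last exit time from a finite set D containing o with μ_h(D)=1, the reversed path (Y_L, …, Y_1, Y_0, o) has the law of the network random walk with initial distribution the law of Y_L, stopped at o. -/
open scoped Classical
open Filter Topology MeasureTheory ProbabilityTheory

/-- A weighted network: an infinite, connected, locally finite graph with
positive edge conductances, encoded by a symmetric conductance function. -/
structure Network (V : Type*) where
  c : V → V → ℝ
  symm : ∀ x y, c x y = c y x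
  nonneg : ∀ x y, 0 ≤ c x y
  locFin : ∀ x, {y | 0 < c x y}.Finite
  conn : ∀ x y, Relation.ReflTransGen (fun a b => 0 < c a b) x y
  deg_pos : ∀ x, 0 < ∑' y, c x y
  infinite : Infinite V

namespace Network

variable {V : Type*} (N : Network V)

/-- Total conductance at a vertex. -/
noncomputable def cTot (x : V) : ℝ := ∑' y, N.c x y

/-- One-step transition probabilities of the network random walk. -/
noncomputable def p (x y : V) : ℝ := N.c x y / N.cTot x

/-- `n`-step transition probabilities of the network random walk. -/
noncomputable def pstep : ℕ → V → V → ℝ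
  | 0, x, y => if x = y then 1 else 0
  | n + 1, x, y => ∑' z, pstep n x z * N.p z y

/-- The network random walk is recurrent: the expected number of returns is infinite. -/
def Recurrent : Prop := ∀ x : V, ¬ Summable (fun n => N.pstep n x x)

/-- `avoid A n x y` is the probability that the walk started at `x` is at `y` at time `n`
without having visited the set `A` at any time `0,…,n`, i.e. `P_x(X_n = y, τ_A > n)`. -/
noncomputable def avoid (A : Set V) : ℕ → V → V → ℝ
  | 0, x, y => if x = y ∧ x ∉ A then 1 else 0
  | n + 1, x, y => if y ∈ A then 0 else ∑' z, avoid A n x z * N.p z y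

/-- Green kernel of the walk killed at `o`:  `G_o(x,y) = Σ_n P_x(X_n = y, τ_o > n)`. -/
noncomputable def GreenK (o x y : V) : ℝ := ∑' n, N.avoid {o} n x y

/-- Green density of the walk killed at `o`:  `g_o(x,y) = G_o(x,y)/c_y`. -/
noncomputable def g (o x y : V) : ℝ := N.GreenK o x y / N.cTot y

/-- The network Laplacian `Δf(v) = Σ_x c_{vx}(f(x) − f(v))`. -/
noncomputable def lap (f : V → ℝ) (v : V) : ℝ := ∑' x, N.c v x * (f x - f v)

/-- A potential on the rooted network `(G,c,o)`: a nonnegative function vanishing at `o`,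
with Laplacian `1` at `o` and harmonic elsewhere. -/
def IsPotential (o : V) (h : V → ℝ) : Prop :=
  (∀ v, 0 ≤ h v) ∧ h o = 0 ∧ N.lap h o = 1 ∧ ∀ v, v ≠ o → N.lap h v = 0

/-- Harmonic measure from `v` on a set `A`:  `ω_v^A(z) = P_v(X_{τ_A} = z)`. -/
noncomputable def harm (A : Set V) (v z : V) : ℝ :=
  if v ∈ A then (if v = z then 1 else 0)
  else if z ∈ A then ∑' n, ∑' w, N.avoid A n v w * N.p w z
  else 0

/-- Effective resistance `R_eff(x ↔ y) = g_x(y,y)`. -/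
noncomputable def Reff (x y : V) : ℝ := N.g x y y

/-- Transition probabilities of the Doob `h`-transform: `p^h(x,y) = p(x,y) h(y)/h(x)`. -/
noncomputable def ph (h : V → ℝ) (x y : V) : ℝ := N.p x y * h y / h x

/-- `n`-step transition probabilities of the `h`-process. -/
noncomputable def phstep (h : V → ℝ) : ℕ → V → V → ℝ
  | 0, x, y => if x = y then 1 else 0
  | n + 1, x, y => ∑' z, phstep h n x z * N.ph h z y

/-- The initial distribution `μ_h(v) = c_{ov} h(v)`. -/
noncomputable def muh (o : V) (h : V → ℝ) (v : V) : ℝ := N.c o v * h v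

end Network

/-- `P` is the law of the Markov chain with initial distribution `μ` and transition
probabilities `q`, as a measure on trajectory space. -/
def IsChainLaw {S : Type*} [MeasurableSpace S] (μ : S → ℝ) (q : S → S → ℝ)
    (P : MeasureTheory.Measure (ℕ → S)) : Prop :=
  ∀ (n : ℕ) (v : ℕ → S),
    P {ω | ∀ i ≤ n, ω i = v i} =
      ENNReal.ofReal (μ (v 0) * ∏ i ∈ Finset.range n, q (v i) (v (i + 1)))


open scoped ENNReal

namespace TimeRev

variable {V : Type*} (N : Network V)

lemma c_summable (x : V) : Summable (N.c x) := by
  apply summable_of_ne_finset_zero (s := (N.locFin x).toFinset)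
  intro y hy
  simp only [Set.Finite.mem_toFinset, Set.mem_setOf_eq, not_lt] at hy
  exact le_antisymm hy (N.nonneg x y)

lemma cTot_pos (x : V) : 0 < N.cTot x := N.deg_pos x

lemma p_nonneg (x y : V) : 0 ≤ N.p x y :=
  div_nonneg (N.nonneg x y) (cTot_pos N x).le

lemma p_summable (x : V) : Summable (N.p x) :=
  (c_summable N x).div_const _

lemma p_row (x : V) : ∑' y, N.p x y = 1 := by
  unfold Network.p
  rw [tsum_div_const]
  exact div_self (cTot_pos N x).ne'

lemma p_mul_cTot (x y : V) : N.p x y * N.cTot x = N.c x y := by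
  unfold Network.p
  exact div_mul_cancel₀ _ (cTot_pos N x).ne'

/-- one-step transition kernel, `ℝ≥0∞`-valued -/
noncomputable def q (x y : V) : ℝ≥0∞ := ENNReal.ofReal (N.p x y)

noncomputable def cT (x : V) : ℝ≥0∞ := ENNReal.ofReal (N.cTot x)

lemma cT_ne_top (x : V) : cT N x ≠ ⊤ := ENNReal.ofReal_ne_top

lemma cT_ne_zero (x : V) : cT N x ≠ 0 := by
  exact (ENNReal.ofReal_pos.2 (cTot_pos N x)).ne'

lemma q_row (x : V) : ∑' y, q N x y = 1 := by
  rw [show (1:ℝ≥0∞) = ENNReal.ofReal 1 by simp, ← p_row N x]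
  exact (ENNReal.ofReal_tsum_of_nonneg (p_nonneg N x) (p_summable N x)).symm

lemma q_le_one (x y : V) : q N x y ≤ 1 := by
  rw [← q_row N x]; exact ENNReal.le_tsum y

lemma q_ne_top (x y : V) : q N x y ≠ ⊤ := ENNReal.ofReal_ne_top

lemma q_ne_zero (x y : V) (hc : 0 < N.c x y) : q N x y ≠ 0 := by
  have : 0 < N.p x y := div_pos hc (cTot_pos N x)
  exact (ENNReal.ofReal_pos.2 this).ne'

lemma rev (x y : V) : cT N x * q N x y = cT N y * q N y x := by
  have e : ∀ a b : V, cT N a * q N a b = ENNReal.ofReal (N.c a b) := by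
    intro a b
    rw [cT, q, ← ENNReal.ofReal_mul (cTot_pos N a).le, mul_comm, p_mul_cTot]
  rw [e, e, N.symm]

lemma countableV (N : Network V) (x0 : V) : Countable V := by
  let R : ℕ → Set V := fun n => Nat.rec {x0} (fun _ S => S ∪ ⋃ x ∈ S, {y | 0 < N.c x y}) n
  have hfin : ∀ n, (R n).Finite := by
    intro n
    induction n with
    | zero => exact Set.finite_singleton x0
    | succ n ih => exact ih.union (Set.Finite.biUnion ih (fun x _ => N.locFin x))
  have hcover : ∀ y, y ∈ ⋃ n, R n := by
    intro y
    have hconn := N.conn x0 y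
    induction hconn with
    | refl => exact Set.mem_iUnion.2 ⟨0, by simp [R]⟩
    | tail hab hbc ih =>
      rcases Set.mem_iUnion.1 ih with ⟨n, hn⟩
      refine Set.mem_iUnion.2 ⟨n + 1, ?_⟩
      exact Set.mem_union_right _ (Set.mem_biUnion hn hbc)
  have : (Set.univ : Set V).Countable := by
    refine Set.Countable.mono (fun y _ => hcover y) ?_
    exact Set.countable_iUnion (fun n => (hfin n).countable)
  exact Set.countable_univ_iff.mp this

end TimeRev

namespace TimeRev

variable {V : Type*} (N : Network V)

lemma tsum_delta (x : V) (c : ℝ≥0∞) : ∑' y : V, (if x = y then c else 0) = c := by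
  rw [tsum_eq_single x (fun b hb => if_neg (fun e => hb e.symm))]; simp

lemma tsum_delta_mul (x : V) (g : V → ℝ≥0∞) (c : ℝ≥0∞) :
    ∑' z, (if x = z then c else 0) * g z = c * g x := by
  rw [tsum_eq_single x (fun b hb => by rw [if_neg (fun e => hb e.symm), zero_mul])]
  simp

lemma tsum_mul_delta (x : V) (g : V → ℝ≥0∞) (c : ℝ≥0∞) :
    ∑' z, g z * (if z = x then c else 0) = g x * c := by
  rw [tsum_eq_single x (fun b hb => by rw [if_neg hb, mul_zero])]
  simp

/-- `n`-step kernel of the network walk. -/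
noncomputable def U (N : Network V) : ℕ → V → V → ℝ≥0∞
  | 0, x, y => if x = y then 1 else 0
  | n+1, x, y => ∑' z, U N n x z * q N z y

/-- `n`-step kernel of the walk avoiding `Z` at times `0, …, n-1`. -/
noncomputable def AZ (N : Network V) (Z : Set V) : ℕ → V → V → ℝ≥0∞
  | 0, x, y => if x = y then 1 else 0
  | n+1, x, y => ∑' z, if z ∈ Z then 0 else AZ N Z n x z * q N z y

/-- `n`-step kernel of the walk avoiding `Z` at times `1, …, n`. -/
noncomputable def A2 (N : Network V) (Z : Set V) : ℕ → V → V → ℝ≥0∞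
  | 0, x, y => if x = y then 1 else 0
  | n+1, x, y => ∑' z, if z ∈ Z then 0 else q N x z * A2 N Z n z y

lemma U_row (n : ℕ) (x : V) : ∑' y, U N n x y = 1 := by
  induction n generalizing x with
  | zero => simpa [U] using tsum_delta x 1
  | succ n ih =>
    calc ∑' y, U N (n+1) x y = ∑' y, ∑' z, U N n x z * q N z y := by simp only [U]
    _ = ∑' z, ∑' y, U N n x z * q N z y := ENNReal.tsum_comm
    _ = ∑' z, U N n x z * ∑' y, q N z y := by simp only [ENNReal.tsum_mul_left]
    _ = 1 := by simp [q_row, ih]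

lemma U_le_one (n : ℕ) (x y : V) : U N n x y ≤ 1 :=
  (ENNReal.le_tsum y).trans_eq (U_row N n x)

lemma U_front (n : ℕ) (x y : V) : U N (n+1) x y = ∑' z, q N x z * U N n z y := by
  induction n generalizing x y with
  | zero =>
    show ∑' z, U N 0 x z * q N z y = _
    simp only [U]
    rw [tsum_delta_mul x (fun z => q N z y) 1, one_mul,
      tsum_mul_delta y (q N x) 1, mul_one]
  | succ n ih =>
    show ∑' z, U N (n+1) x z * q N z y = _
    calc ∑' z, U N (n+1) x z * q N z y
        = ∑' z, (∑' w, q N x w * U N n w z) * q N z y := by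
          apply tsum_congr; intro z; rw [ih]
      _ = ∑' z, ∑' w, q N x w * U N n w z * q N z y := by
          apply tsum_congr; intro z; rw [ENNReal.tsum_mul_right]
      _ = ∑' w, ∑' z, q N x w * U N n w z * q N z y := ENNReal.tsum_comm
      _ = ∑' w, q N x w * ∑' z, U N n w z * q N z y := by
          apply tsum_congr; intro w
          rw [← ENNReal.tsum_mul_left]
          apply tsum_congr; intro z; ring
      _ = ∑' w, q N x w * U N (n+1) w y := by simp only [U]

lemma AZ_front (Z : Set V) (n : ℕ) (x y : V) :
    AZ N Z (n+1) x y = if x ∈ Z then 0 else ∑' z, q N x z * AZ N Z n z y := by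
  induction n generalizing x y with
  | zero =>
    show ∑' z, (if z ∈ Z then 0 else AZ N Z 0 x z * q N z y) = _
    by_cases hx : x ∈ Z
    · rw [if_pos hx]
      rw [ENNReal.summable.tsum_eq_zero_iff]
      intro z
      by_cases hz : z ∈ Z
      · rw [if_pos hz]
      · rw [if_neg hz]
        simp only [AZ]
        rcases eq_or_ne x z with rfl | hxz
        · exact absurd hx hz
        · rw [if_neg hxz, zero_mul]
    · rw [if_neg hx]
      rw [tsum_eq_single x]
      · rw [if_neg hx]
        simp only [AZ, eq_self_iff_true, if_true, one_mul]
        rw [tsum_mul_delta y (q N x) 1, mul_one]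
      · intro b hb
        by_cases hbz : b ∈ Z
        · rw [if_pos hbz]
        · rw [if_neg hbz]
          simp only [AZ]
          rw [if_neg (fun e => hb e.symm), zero_mul]
  | succ n ih =>
    show ∑' z, (if z ∈ Z then 0 else AZ N Z (n+1) x z * q N z y) = _
    by_cases hx : x ∈ Z
    · rw [if_pos hx]
      rw [ENNReal.summable.tsum_eq_zero_iff]
      intro z
      by_cases hz : z ∈ Z
      · rw [if_pos hz]
      · rw [if_neg hz, ih, if_pos hx, zero_mul]
    · rw [if_neg hx]
      calc ∑' z, (if z ∈ Z then 0 else AZ N Z (n+1) x z * q N z y)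
          = ∑' z, (if z ∈ Z then 0 else (∑' w, q N x w * AZ N Z n w z) * q N z y) := by
            apply tsum_congr; intro z
            by_cases hz : z ∈ Z
            · rw [if_pos hz, if_pos hz]
            · rw [if_neg hz, if_neg hz, ih, if_neg hx]
        _ = ∑' z, ∑' w, (if z ∈ Z then 0 else q N x w * AZ N Z n w z * q N z y) := by
            apply tsum_congr; intro z
            by_cases hz : z ∈ Z
            · simp [if_pos hz]
            · simp only [if_neg hz]
              rw [ENNReal.tsum_mul_right]
        _ = ∑' w, ∑' z, (if z ∈ Z then 0 else q N x w * AZ N Z n w z * q N z y) := ENNReal.tsum_comm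
        _ = ∑' w, q N x w * ∑' z, (if z ∈ Z then 0 else AZ N Z n w z * q N z y) := by
            apply tsum_congr; intro w
            rw [← ENNReal.tsum_mul_left]
            apply tsum_congr; intro z
            by_cases hz : z ∈ Z
            · simp [if_pos hz]
            · simp only [if_neg hz]; ring
        _ = ∑' w, q N x w * AZ N Z (n+1) w y := by simp only [AZ]

end TimeRev

namespace TimeRev

variable {V : Type*} (N : Network V)

lemma AZ_start (Z : Set V) (n : ℕ) {x : V} (hx : x ∈ Z) (y : V) : AZ N Z (n+1) x y = 0 := by
  rw [AZ_front, if_pos hx]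

/-- survival sum: avoid `Z` at times `0, …, n`. -/
noncomputable def SZ (N : Network V) (Z : Set V) (n : ℕ) (x : V) : ℝ≥0∞ :=
  ∑' y, if y ∈ Z then 0 else AZ N Z n x y

/-- hit `Z` at time `n+1` having avoided it before. -/
noncomputable def hitZ (N : Network V) (Z : Set V) (n : ℕ) (x : V) : ℝ≥0∞ :=
  ∑' y, if y ∈ Z then AZ N Z (n+1) x y else 0

lemma AZ_row (Z : Set V) (n : ℕ) (x : V) : ∑' y, AZ N Z (n+1) x y = SZ N Z n x := by
  calc ∑' y, AZ N Z (n+1) x y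
      = ∑' y, ∑' z, (if z ∈ Z then 0 else AZ N Z n x z * q N z y) := by simp only [AZ]
    _ = ∑' z, ∑' y, (if z ∈ Z then 0 else AZ N Z n x z * q N z y) := ENNReal.tsum_comm
    _ = ∑' z, (if z ∈ Z then 0 else AZ N Z n x z) := by
        apply tsum_congr; intro z
        by_cases hz : z ∈ Z
        · simp [hz]
        · simp only [if_neg hz]
          rw [ENNReal.tsum_mul_left, q_row, mul_one]
    _ = SZ N Z n x := rfl

lemma SZ_succ (Z : Set V) (n : ℕ) (x : V) :
    SZ N Z n x = hitZ N Z n x + SZ N Z (n+1) x := by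
  rw [← AZ_row]
  calc ∑' y, AZ N Z (n+1) x y
      = ∑' y, ((if y ∈ Z then AZ N Z (n+1) x y else 0)
          + (if y ∈ Z then 0 else AZ N Z (n+1) x y)) := by
        apply tsum_congr; intro y; split <;> simp
    _ = hitZ N Z n x + SZ N Z (n+1) x := ENNReal.tsum_add

lemma SZ_zero (Z : Set V) (x : V) : SZ N Z 0 x = if x ∈ Z then 0 else 1 := by
  unfold SZ
  rw [tsum_eq_single x (fun b hb => by
    by_cases hbz : b ∈ Z
    · rw [if_pos hbz]
    · rw [if_neg hbz]
      simp only [AZ]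
      rw [if_neg (fun e : x = b => hb e.symm)])]
  simp only [AZ]
  split <;> simp

lemma SZ_partial (Z : Set V) (x : V) (n : ℕ) :
    (∑ k ∈ Finset.range n, hitZ N Z k x) + SZ N Z n x = SZ N Z 0 x := by
  induction n with
  | zero => simp
  | succ n ih =>
    rw [Finset.sum_range_succ, add_assoc, ← SZ_succ, ih]

lemma hit_sum_le_one (Z : Set V) (x : V) : ∑' k, hitZ N Z k x ≤ 1 := by
  rw [ENNReal.tsum_eq_iSup_nat]
  apply iSup_le
  intro n
  calc ∑ k ∈ Finset.range n, hitZ N Z k x ≤ _ + SZ N Z n x := le_add_right le_rfl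
    _ = SZ N Z 0 x := SZ_partial N Z x n
    _ ≤ 1 := by rw [SZ_zero]; split <;> simp

lemma AZ_rev (Z : Set V) (n : ℕ) : ∀ x y, cT N x * AZ N Z n x y = cT N y * A2 N Z n y x := by
  induction n with
  | zero =>
    intro x y
    simp only [AZ, A2]
    rcases eq_or_ne x y with rfl | hxy
    · simp
    · rw [if_neg hxy, if_neg (Ne.symm hxy), mul_zero, mul_zero]
  | succ n ih =>
    intro x y
    simp only [AZ, A2]
    rw [← ENNReal.tsum_mul_left, ← ENNReal.tsum_mul_left]
    apply tsum_congr; intro z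
    by_cases hz : z ∈ Z
    · simp [hz]
    · simp only [if_neg hz]
      calc cT N x * (AZ N Z n x z * q N z y)
          = (cT N x * AZ N Z n x z) * q N z y := by ring
        _ = (cT N z * A2 N Z n z x) * q N z y := by rw [ih]
        _ = (cT N z * q N z y) * A2 N Z n z x := by ring
        _ = (cT N y * q N y z) * A2 N Z n z x := by rw [rev]
        _ = cT N y * (q N y z * A2 N Z n z x) := by ring

lemma A2_bridge (Z : Set V) (n : ℕ) : ∀ x y : V,
    (if x ∈ Z then 0 else ∑' w, A2 N Z n x w * q N w y) = AZ N Z (n+1) x y := by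
  induction n with
  | zero =>
    intro x y
    rw [AZ_front]
    by_cases hx : x ∈ Z
    · rw [if_pos hx, if_pos hx]
    · rw [if_neg hx, if_neg hx]
      simp only [A2, AZ]
      rw [tsum_delta_mul x (fun w => q N w y) 1, one_mul,
        tsum_mul_delta y (q N x) 1, mul_one]
  | succ n ih =>
    intro x y
    by_cases hx : x ∈ Z
    · rw [if_pos hx, eq_comm]
      exact AZ_start N Z (n+1) hx y
    · rw [if_neg hx]
      calc ∑' w, A2 N Z (n+1) x w * q N w y
          = ∑' w, (∑' z, if z ∈ Z then 0 else q N x z * A2 N Z n z w) * q N w y := by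
            simp only [A2]
        _ = ∑' w, ∑' z, (if z ∈ Z then 0 else q N x z * A2 N Z n z w) * q N w y := by
            apply tsum_congr; intro w; rw [ENNReal.tsum_mul_right]
        _ = ∑' z, ∑' w, (if z ∈ Z then 0 else q N x z * A2 N Z n z w) * q N w y :=
            ENNReal.tsum_comm
        _ = ∑' z, (if z ∈ Z then 0 else q N x z * ∑' w, A2 N Z n z w * q N w y) := by
            apply tsum_congr; intro z
            by_cases hz : z ∈ Z
            · simp [hz]
            · simp only [if_neg hz]
              rw [← ENNReal.tsum_mul_left]
              apply tsum_congr; intro w; ring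
        _ = ∑' z, (if z ∈ Z then 0 else q N x z * AZ N Z (n+1) z y) := by
            apply tsum_congr; intro z
            by_cases hz : z ∈ Z
            · simp [hz]
            · rw [if_neg hz, if_neg hz, ← ih z y, if_neg hz]
        _ = ∑' z, q N x z * AZ N Z (n+1) z y := by
            apply tsum_congr; intro z
            by_cases hz : z ∈ Z
            · rw [if_pos hz, AZ_start N Z n hz, mul_zero]
            · rw [if_neg hz]
        _ = AZ N Z (n+2) x y := by rw [AZ_front, if_neg hx]

end TimeRev

namespace TimeRev

variable {V : Type*} (N : Network V)

lemma pstep_eq (n : ℕ) : ∀ x y, N.pstep n x y = (U N n x y).toReal := by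
  induction n with
  | zero => intro x y; simp only [Network.pstep, U]; split <;> simp
  | succ n ih =>
    intro x y
    show ∑' z, N.pstep n x z * N.p z y = _
    have h1 : ∀ z, N.pstep n x z * N.p z y = (U N n x z * q N z y).toReal := fun z => by
      rw [ih, ENNReal.toReal_mul, q, ENNReal.toReal_ofReal (p_nonneg N z y)]
    rw [tsum_congr h1, ← ENNReal.tsum_toReal_eq (fun z =>
      ENNReal.mul_ne_top ((U_le_one N n x z).trans_lt ENNReal.one_lt_top).ne (q_ne_top N z y))]
    rfl

lemma U_tsum_top (hrec : N.Recurrent) (x : V) : ∑' n, U N n x x = ⊤ := by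
  by_contra hne
  exact hrec x (by simpa only [pstep_eq] using ENNReal.summable_toReal hne)

/-- first passage to `o` at time `n+1`. -/
noncomputable def fp (N : Network V) (o : V) (n : ℕ) (x : V) : ℝ≥0∞ :=
  ∑' z, q N x z * AZ N {o} n z o

lemma fp_zero (o x : V) : fp N o 0 x = q N x o := by
  unfold fp
  simp only [AZ]
  rw [tsum_mul_delta o (q N x) 1, mul_one]

lemma fp_front (o : V) (j : ℕ) (x : V) :
    fp N o (j+1) x = ∑' z, (if z = o then 0 else q N x z * fp N o j z) := by
  unfold fp
  apply tsum_congr; intro z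
  rw [AZ_front]
  by_cases hz : z = o
  · simp [hz, Set.mem_singleton_iff]
  · rw [if_neg (by simpa [Set.mem_singleton_iff] using hz), if_neg hz]

lemma renewal (o : V) (n : ℕ) : ∀ x,
    U N (n+1) x o = ∑ j ∈ Finset.range (n+1), fp N o j x * U N (n-j) o o := by
  induction n with
  | zero =>
    intro x
    rw [U_front, Finset.sum_range_one, Nat.sub_zero, fp_zero]
    simp only [U]
    rw [tsum_mul_delta o (q N x) 1]
    simp
  | succ n ih =>
    intro x
    rw [U_front]
    calc ∑' z, q N x z * U N (n+1) z o
        = ∑' z, q N x z * ∑ j ∈ Finset.range (n+1), fp N o j z * U N (n-j) o o := by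
          apply tsum_congr; intro z; rw [ih]
      _ = ∑' z, ∑ j ∈ Finset.range (n+1), q N x z * (fp N o j z * U N (n-j) o o) := by
          apply tsum_congr; intro z; rw [Finset.mul_sum]
      _ = ∑ j ∈ Finset.range (n+1), ∑' z, q N x z * (fp N o j z * U N (n-j) o o) :=
          Summable.tsum_finsetSum (fun j _ => ENNReal.summable)
      _ = ∑ j ∈ Finset.range (n+1), (∑' z, q N x z * fp N o j z) * U N (n-j) o o := by
          apply Finset.sum_congr rfl; intro j _
          rw [← ENNReal.tsum_mul_right]
          apply tsum_congr; intro z; ring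
      _ = ∑ j ∈ Finset.range (n+1),
            (q N x o * fp N o j o + fp N o (j+1) x) * U N (n-j) o o := by
          apply Finset.sum_congr rfl; intro j _
          congr 1
          rw [ENNReal.tsum_eq_add_tsum_ite o, ← fp_front]
      _ = ∑ j ∈ Finset.range (n+2), fp N o j x * U N (n+1-j) o o := by
          rw [Finset.sum_range_succ' (fun j => fp N o j x * U N (n+1-j) o o) (n+1)]
          simp only [Nat.succ_sub_succ, Nat.sub_zero, add_mul, Finset.sum_add_distrib]
          rw [add_comm (∑ j ∈ Finset.range (n+1), q N x o * fp N o j o * U N (n-j) o o)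
            (∑ j ∈ Finset.range (n+1), fp N o (j+1) x * U N (n-j) o o)]
          congr 1
          rw [fp_zero, ih o, Finset.mul_sum]
          apply Finset.sum_congr rfl; intro j _; ring

end TimeRev

namespace TimeRev

variable {V : Type*} (N : Network V)

/-- probability of ever hitting `o` (at time `≥ 1` if starting at `o`, `≥ 0` otherwise). -/
noncomputable def phi (N : Network V) (o z : V) : ℝ≥0∞ := ∑' j, AZ N {o} j z o

lemma tsum_shift (f : ℕ → ℝ≥0∞) : ∑' n, f n = f 0 + ∑' n, f (n+1) := by
  rw [tsum_eq_zero_add']; exact ENNReal.summable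

lemma phi_o (o : V) : phi N o o = 1 := by
  unfold phi
  rw [tsum_eq_single 0 (fun j hj => by
    cases j with
    | zero => exact absurd rfl hj
    | succ j => exact AZ_start N {o} j rfl _)]
  simp [AZ]

lemma hit_singleton (o : V) (k : ℕ) (z : V) : hitZ N {o} k z = AZ N {o} (k+1) z o := by
  unfold hitZ
  rw [tsum_eq_single o (fun b hb => by rw [if_neg (by simpa using hb)])]
  simp

lemma phi_le_one (o z : V) : phi N o z ≤ 1 := by
  rcases eq_or_ne z o with rfl | hz
  · exact (phi_o N z).le
  · unfold phi
    rw [tsum_shift]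
    have h0 : AZ N {o} 0 z o = 0 := by simp [AZ, hz]
    rw [h0, zero_add]
    calc ∑' j, AZ N {o} (j+1) z o = ∑' j, hitZ N {o} j z := by
          apply tsum_congr; intro j; rw [hit_singleton]
      _ ≤ 1 := hit_sum_le_one N {o} z

lemma phi_eq (o z : V) (hz : z ≠ o) : phi N o z = ∑' w, q N z w * phi N o w := by
  unfold phi
  rw [tsum_shift]
  have h0 : AZ N {o} 0 z o = 0 := by simp [AZ, hz]
  rw [h0, zero_add]
  calc ∑' j, AZ N {o} (j+1) z o
      = ∑' j, ∑' w, q N z w * AZ N {o} j w o := by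
        apply tsum_congr; intro j
        rw [AZ_front, if_neg (by simpa using hz)]
    _ = ∑' w, ∑' j, q N z w * AZ N {o} j w o := ENNReal.tsum_comm
    _ = ∑' w, q N z w * phi N o w := by
        apply tsum_congr; intro w; rw [ENNReal.tsum_mul_left]; rfl

lemma F0_eq (o : V) : ∑' j, fp N o j o = ∑' w, q N o w * phi N o w := by
  unfold fp
  rw [ENNReal.tsum_comm]
  apply tsum_congr; intro w
  rw [ENNReal.tsum_mul_left]; rfl

lemma slack {a b : V → ℝ≥0∞} (ha : ∑' z, a z = 1) (hb : ∀ z, b z ≤ 1)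
    (h : ∑' z, a z * b z = 1) : ∀ z, a z ≠ 0 → b z = 1 := by
  intro z0 haz
  by_contra hbz
  have hb1 : b z0 < 1 := (hb z0).lt_of_ne hbz
  have ha_le : a z0 ≤ 1 := ha ▸ ENNReal.le_tsum z0
  have ha_top : a z0 ≠ ⊤ := (ha_le.trans_lt ENNReal.one_lt_top).ne
  have hrest_le : ∑' z, (if z = z0 then 0 else a z * b z) ≤ ∑' z, (if z = z0 then 0 else a z) := by
    apply Summable.tsum_le_tsum _ ENNReal.summable ENNReal.summable
    intro z
    split
    · exact le_rfl
    · calc a z * b z ≤ a z * 1 := mul_le_mul_right (hb z) _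
        _ = a z := mul_one _
  have hrest_top : ∑' z, (if z = z0 then 0 else a z) ≠ ⊤ := by
    refine ne_top_of_le_ne_top (by simp : (1:ℝ≥0∞) ≠ ⊤) ?_
    rw [← ha]
    apply Summable.tsum_le_tsum _ ENNReal.summable ENNReal.summable
    intro z; split <;> simp
  have key : ∑' z, a z * b z < 1 := by
    rw [ENNReal.tsum_eq_add_tsum_ite z0]
    calc a z0 * b z0 + ∑' z, (if z = z0 then 0 else a z * b z)
        ≤ a z0 * b z0 + ∑' z, (if z = z0 then 0 else a z) := add_le_add_right hrest_le _
      _ < a z0 + ∑' z, (if z = z0 then 0 else a z) := by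
          apply ENNReal.add_lt_add_right hrest_top
          calc a z0 * b z0 < a z0 * 1 := (ENNReal.mul_lt_mul_iff_right haz ha_top).2 hb1
            _ = a z0 := mul_one _
      _ = 1 := by rw [← ENNReal.tsum_eq_add_tsum_ite z0, ha]
  exact key.ne h

end TimeRev

namespace TimeRev

variable {V : Type*} (N : Network V)

lemma F0_le_one (o : V) : ∑' j, fp N o j o ≤ 1 := by
  rw [F0_eq]
  calc ∑' w, q N o w * phi N o w
      ≤ ∑' w, q N o w * 1 :=
        Summable.tsum_le_tsum (fun w => mul_le_mul_right (phi_le_one N o w) _)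
          ENNReal.summable ENNReal.summable
    _ = 1 := by simp [q_row]

lemma GN_bound (o : V) (m : ℕ) :
    ∑ k ∈ Finset.range m, U N k o o
      ≤ 1 + (∑' j, fp N o j o) * ∑ k ∈ Finset.range m, U N k o o := by
  cases m with
  | zero => simp
  | succ m =>
    rw [Finset.sum_range_succ' (fun k => U N k o o) m]
    have hU0 : U N 0 o o = 1 := by simp [U]
    rw [hU0, add_comm]
    apply add_le_add_right
    have hsub : ∀ j, Finset.range (m + 1 - j) ⊆ Finset.range (m+1) :=
      fun j => Finset.range_subset_range.2 (Nat.sub_le _ _)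
    calc ∑ k ∈ Finset.range m, U N (k+1) o o
        ≤ ∑ k ∈ Finset.range (m+1), U N (k+1) o o :=
          Finset.sum_le_sum_of_subset (Finset.range_subset_range.2 (Nat.le_succ m))
      _ = ∑ k ∈ Finset.range (m+1), ∑ j ∈ Finset.range (k+1), fp N o j o * U N (k-j) o o := by
          apply Finset.sum_congr rfl; intro k _; rw [renewal]
      _ = ∑ k ∈ Finset.range (m+1), ∑ j ∈ Finset.range (m+1),
            (if j ≤ k then fp N o j o * U N (k-j) o o else 0) := by
          apply Finset.sum_congr rfl; intro k hk
          have hk' := Finset.mem_range.1 hk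
          have hfil : (Finset.range (m+1)).filter (fun j => j ≤ k) = Finset.range (k+1) := by
            ext j
            simp only [Finset.mem_filter, Finset.mem_range]
            constructor
            · rintro ⟨_, h2⟩; omega
            · intro hj; omega
          rw [← Finset.sum_filter, hfil]
      _ = ∑ j ∈ Finset.range (m+1), ∑ k ∈ Finset.range (m+1),
            (if j ≤ k then fp N o j o * U N (k-j) o o else 0) := Finset.sum_comm
      _ ≤ ∑ j ∈ Finset.range (m+1), fp N o j o * ∑ k ∈ Finset.range (m+1), U N k o o := by
          apply Finset.sum_le_sum; intro j _
          have e1 : ∑ k ∈ Finset.range (m+1), (if j ≤ k then fp N o j o * U N (k-j) o o else 0)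
              = fp N o j o * ∑ k ∈ Finset.range (m+1), (if j ≤ k then U N (k-j) o o else 0) := by
            rw [Finset.mul_sum]
            apply Finset.sum_congr rfl; intro k _
            split <;> simp
          rw [e1]
          apply mul_le_mul_right
          have hfil2 : (Finset.range (m+1)).filter (fun k => j ≤ k) = Finset.Ico j (m+1) := by
            ext k
            simp only [Finset.mem_filter, Finset.mem_range, Finset.mem_Ico]
            constructor
            · rintro ⟨h1, h2⟩; omega
            · intro hj; omega
          calc ∑ k ∈ Finset.range (m+1), (if j ≤ k then U N (k-j) o o else 0)
              = ∑ k ∈ Finset.Ico j (m+1), U N (k-j) o o := by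
                rw [← Finset.sum_filter, hfil2]
            _ = ∑ i ∈ Finset.range (m+1-j), U N (j+i-j) o o := by
                rw [Finset.sum_Ico_eq_sum_range]
            _ = ∑ i ∈ Finset.range (m+1-j), U N i o o := by
                apply Finset.sum_congr rfl; intro i _
                congr 1; omega
            _ ≤ ∑ k ∈ Finset.range (m+1), U N k o o :=
                Finset.sum_le_sum_of_subset (hsub j)
      _ ≤ (∑' j, fp N o j o) * ∑ k ∈ Finset.range (m+1), U N k o o := by
          rw [← Finset.sum_mul]
          exact mul_le_mul_left (ENNReal.sum_le_tsum _) _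
      _ = (∑' j, fp N o j o) * (1 + ∑ k ∈ Finset.range m, U N (k+1) o o) := by
          congr 1
          rw [Finset.sum_range_succ' (fun k => U N k o o) m, hU0, add_comm]

lemma F0_one (hrec : N.Recurrent) (o : V) : ∑' j, fp N o j o = 1 := by
  refine le_antisymm (F0_le_one N o) ?_
  by_contra hcon
  rw [not_le] at hcon
  set F := ∑' j, fp N o j o with hF
  have hFtop : F ≠ ⊤ := (hcon.trans ENNReal.one_lt_top).ne
  have hF1 : F.toReal < 1 := by
    have := (ENNReal.toReal_lt_toReal hFtop ENNReal.one_ne_top).2 hcon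
    simpa using this
  have hGNtop : ∀ m, (∑ k ∈ Finset.range m, U N k o o) ≠ ⊤ := by
    intro m
    refine ne_top_of_le_ne_top (ENNReal.natCast_ne_top m) ?_
    calc ∑ k ∈ Finset.range m, U N k o o ≤ ∑ _k ∈ Finset.range m, 1 :=
          Finset.sum_le_sum (fun k _ => U_le_one N k o o)
      _ = (m : ℝ≥0∞) := by simp
  have key : ∀ m, (∑ k ∈ Finset.range m, U N k o o) ≤ ENNReal.ofReal (1 / (1 - F.toReal)) := by
    intro m
    set x := ∑ k ∈ Finset.range m, U N k o o with hx
    have hxtop : x ≠ ⊤ := hGNtop m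
    have h1 : x ≤ 1 + F * x := GN_bound N o m
    have hrhs : (1 + F * x) ≠ ⊤ :=
      ENNReal.add_ne_top.2 ⟨ENNReal.one_ne_top, ENNReal.mul_ne_top hFtop hxtop⟩
    have h2 : x.toReal ≤ 1 + F.toReal * x.toReal := by
      have := ENNReal.toReal_mono hrhs h1
      rwa [ENNReal.toReal_add ENNReal.one_ne_top (ENNReal.mul_ne_top hFtop hxtop),
        ENNReal.toReal_mul, ENNReal.toReal_one] at this
    have h4 : 0 < 1 - F.toReal := by linarith
    have h3 : x.toReal ≤ 1 / (1 - F.toReal) := by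
      rw [le_div_iff₀ h4]
      nlinarith [h2]
    calc x = ENNReal.ofReal x.toReal := (ENNReal.ofReal_toReal hxtop).symm
      _ ≤ _ := ENNReal.ofReal_le_ofReal h3
  have hfin : ∑' k, U N k o o ≤ ENNReal.ofReal (1 / (1 - F.toReal)) := by
    rw [ENNReal.tsum_eq_iSup_nat]
    exact iSup_le key
  rw [U_tsum_top N hrec o] at hfin
  exact ENNReal.ofReal_ne_top (top_le_iff.1 hfin)

lemma phi_one (hrec : N.Recurrent) (o x : V) : phi N o x = 1 := by
  have step : ∀ b c, phi N o b = 1 → 0 < N.c b c → phi N o c = 1 := by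
    intro b c hb hc
    have hsum : ∑' w, q N b w * phi N o w = 1 := by
      rcases eq_or_ne b o with rfl | hbo
      · rw [← F0_eq]; exact F0_one N hrec b
      · rw [← phi_eq N o b hbo]; exact hb
    exact slack (q_row N b) (phi_le_one N o) hsum c (q_ne_zero N b c hc)
  have main : ∀ y, Relation.ReflTransGen (fun a b => 0 < N.c a b) o y → phi N o y = 1 := by
    intro y hy
    induction hy with
    | refl => exact phi_o N o
    | tail hab hbc ih => exact step _ _ ih hbc
  exact main x (N.conn o x)

end TimeRev

namespace TimeRev

variable {V : Type*} (N : Network V)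

lemma c_pos_of_q_ne_zero {x z : V} (hq : q N x z ≠ 0) : 0 < N.c x z := by
  have hp : 0 < N.p x z := by
    rcases lt_or_ge 0 (N.p x z) with h | h
    · exact h
    · exact absurd (ENNReal.ofReal_eq_zero.2 h) hq
  rcases lt_or_ge 0 (N.c x z) with h | h
  · exact h
  · exfalso
    have : N.p x z ≤ 0 := div_nonpos_of_nonpos_of_nonneg h (cTot_pos N x).le
    linarith

lemma h_zero_spread (o : V) (h : V → ℝ) (hpot : N.IsPotential o h) {z : V} (hz : h z = 0)
    (hzo : z ≠ o) : ∀ x, 0 < N.c z x → h x = 0 := by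
  obtain ⟨hnn, ho, hlap1, hlap0⟩ := hpot
  have hl := hlap0 z hzo
  unfold Network.lap at hl
  simp only [hz, sub_zero] at hl
  have hsum : Summable (fun x => N.c z x * h x) := by
    apply summable_of_ne_finset_zero (s := (N.locFin z).toFinset)
    intro x hx
    simp only [Set.Finite.mem_toFinset, Set.mem_setOf_eq, not_lt] at hx
    rw [le_antisymm hx (N.nonneg z x), zero_mul]
  intro x hcx
  have hle : N.c z x * h x ≤ 0 := by
    rw [← hl]
    exact Summable.le_tsum hsum x (fun b _ => mul_nonneg (N.nonneg z b) (hnn b))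
  have hge : 0 ≤ N.c z x * h x := mul_nonneg (N.nonneg z x) (hnn x)
  have := le_antisymm hle hge
  rcases mul_eq_zero.1 this with h1 | h2
  · exact absurd h1 (ne_of_gt hcx)
  · exact h2

lemma AZ_eqZ (o : V) (h : V → ℝ) (hpot : N.IsPotential o h) (n : ℕ) :
    ∀ x y, (0 < h x ∨ x = o) → AZ N {o} n x y = AZ N {u | h u = 0} n x y := by
  induction n with
  | zero => intro x y _; rfl
  | succ n ih =>
    intro x y hx
    rw [AZ_front, AZ_front]
    rcases hx with hx | rfl
    · have hxo : x ≠ o := fun e => by rw [e, hpot.2.1] at hx; exact lt_irrefl _ hx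
      have hxZ : x ∉ {u | h u = 0} := by
        simp only [Set.mem_setOf_eq]
        exact fun e => absurd hx (by rw [e]; exact lt_irrefl 0)
      rw [if_neg (by simpa using hxo), if_neg hxZ]
      apply tsum_congr; intro z
      rcases eq_or_ne (q N x z) 0 with hq | hq
      · rw [hq, zero_mul, zero_mul]
      · have hcz : 0 < N.c x z := c_pos_of_q_ne_zero N hq
        have hz' : 0 < h z ∨ z = o := by
          by_cases hzo : z = o
          · right; exact hzo
          · left
            rcases lt_or_eq_of_le (hpot.1 z) with hpos | heq
            · exact hpos
            · exfalso
              have := h_zero_spread N o h hpot heq.symm hzo x (by rw [N.symm]; exact hcz)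
              rw [this] at hx
              exact lt_irrefl _ hx
        rw [ih z y hz']
    · have h1 : x ∈ ({x} : Set V) := rfl
      rw [if_pos h1, if_pos (show x ∈ {u | h u = 0} from hpot.2.1)]

/-- the `n`-step mass of the `h`-process at `y`, in kernel form. -/
noncomputable def mker (o : V) (h : V → ℝ) (n : ℕ) (y : V) : ℝ≥0∞ :=
  cT N o * (∑' w, q N o w * AZ N {u | h u = 0} n w y) * ENNReal.ofReal (h y)

lemma mker_total (hrec : N.Recurrent) (o : V) (h : V → ℝ) (hpot : N.IsPotential o h)
    (y : V) (hy : 0 < h y) :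
    ∑' n, mker N o h n y = ENNReal.ofReal (h y) * cT N y := by
  have hyo : y ≠ o := fun e => by rw [e, hpot.2.1] at hy; exact lt_irrefl _ hy
  have hyZ : y ∉ {u | h u = 0} := by
    simp only [Set.mem_setOf_eq]; exact fun e => absurd hy (by rw [e]; exact lt_irrefl 0)
  have key : ∀ n, mker N o h n y
      = ENNReal.ofReal (h y) * (cT N y * AZ N {o} (n+1) y o) := by
    intro n
    unfold mker
    rw [mul_comm (cT N o * _) (ENNReal.ofReal (h y))]
    congr 1
    calc cT N o * ∑' w, q N o w * AZ N {u | h u = 0} n w y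
        = ∑' w, (cT N y * A2 N {u | h u = 0} n y w) * q N w o := by
          rw [← ENNReal.tsum_mul_left]
          apply tsum_congr; intro w
          calc cT N o * (q N o w * AZ N {u | h u = 0} n w y)
              = (cT N o * q N o w) * AZ N {u | h u = 0} n w y := by ring
            _ = (cT N w * q N w o) * AZ N {u | h u = 0} n w y := by rw [rev]
            _ = (cT N w * AZ N {u | h u = 0} n w y) * q N w o := by ring
            _ = (cT N y * A2 N {u | h u = 0} n y w) * q N w o := by rw [AZ_rev]
      _ = cT N y * ∑' w, A2 N {u | h u = 0} n y w * q N w o := by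
          rw [← ENNReal.tsum_mul_left]; apply tsum_congr; intro w; ring
      _ = cT N y * AZ N {u | h u = 0} (n+1) y o := by
          rw [← A2_bridge, if_neg hyZ]
      _ = cT N y * AZ N {o} (n+1) y o := by
          rw [← AZ_eqZ N o h hpot (n+1) y o (Or.inl hy)]
  calc ∑' n, mker N o h n y
      = ∑' n, ENNReal.ofReal (h y) * (cT N y * AZ N {o} (n+1) y o) := tsum_congr key
    _ = ENNReal.ofReal (h y) * (cT N y * ∑' n, AZ N {o} (n+1) y o) := by
        rw [ENNReal.tsum_mul_left, ENNReal.tsum_mul_left]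
    _ = ENNReal.ofReal (h y) * cT N y := by
        have h2 := phi_one N hrec o y
        unfold phi at h2
        rw [tsum_shift] at h2
        have h0 : AZ N {o} 0 y o = 0 := by
          simp only [AZ]
          rw [if_neg hyo]
        rw [h0, zero_add] at h2
        rw [h2, mul_one]

end TimeRev

namespace TimeRev

variable {V : Type*} (N : Network V)

noncomputable def qh (N : Network V) (h : V → ℝ) (x y : V) : ℝ≥0∞ :=
  ENNReal.ofReal (N.ph h x y)

noncomputable def mu0 (N : Network V) (o : V) (h : V → ℝ) (w : V) : ℝ≥0∞ :=
  ENNReal.ofReal (N.muh o h w)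

noncomputable def cylProd (N : Network V) (o : V) (h : V → ℝ) (n : ℕ) (u : ℕ → V) : ℝ≥0∞ :=
  mu0 N o h (u 0) * ∏ i ∈ Finset.range n, qh N h (u i) (u (i+1))

def Cyl (n : ℕ) (u : ℕ → V) : Set (ℕ → V) := {ω | ∀ i ≤ n, ω i = u i}

def Window (D : Finset V) (n k : ℕ) : Set (ℕ → V) := {ω | ∀ m, n < m → m ≤ n + k → ω m ∉ D}

def Tail (D : Finset V) (n : ℕ) : Set (ℕ → V) := {ω | ∀ m, n < m → ω m ∉ D}

noncomputable def UD (N : Network V) (h : V → ℝ) (D : Finset V) : ℕ → V → ℝ≥0∞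
  | 0, _ => 1
  | k+1, x => ∑' z, if z ∈ D then 0 else qh N h x z * UD N h D k z

section Meas

variable {W : Type*} [MeasurableSpace W]

lemma meas_pre (hms : ∀ s : Set W, MeasurableSet s) (i : ℕ) (s : Set W) : MeasurableSet {ω : ℕ → W | ω i ∈ s} :=
  (measurable_pi_apply i) (hms s)

end Meas

section MeasV

variable [MeasurableSpace V]

lemma meas_cyl (hms : ∀ s : Set V, MeasurableSet s) (n : ℕ) (u : ℕ → V) : MeasurableSet (Cyl n u) := by
  have e : Cyl n u = ⋂ i, ⋂ (_ : i ≤ n), {ω : ℕ → V | ω i ∈ ({u i} : Set V)} := by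
    ext ω; simp [Cyl]
  rw [e]
  exact MeasurableSet.iInter fun i => MeasurableSet.iInter fun _ => meas_pre hms i _

lemma meas_window (hms : ∀ s : Set V, MeasurableSet s) (D : Finset V) (n k : ℕ) : MeasurableSet (Window D n k) := by
  have e : Window D n k
      = ⋂ m, ⋂ (_ : n < m), ⋂ (_ : m ≤ n + k), {ω : ℕ → V | ω m ∈ ((↑D : Set V)ᶜ)} := by
    ext ω; simp [Window]
  rw [e]
  exact MeasurableSet.iInter fun m => MeasurableSet.iInter fun _ =>
    MeasurableSet.iInter fun _ => meas_pre hms m _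

lemma meas_tail (hms : ∀ s : Set V, MeasurableSet s) (D : Finset V) (n : ℕ) : MeasurableSet (Tail D n) := by
  have e : Tail D n = ⋂ m, ⋂ (_ : n < m), {ω : ℕ → V | ω m ∈ ((↑D : Set V)ᶜ)} := by
    ext ω; simp [Tail]
  rw [e]
  exact MeasurableSet.iInter fun m => MeasurableSet.iInter fun _ => meas_pre hms m _

end MeasV

lemma ph_nonneg (h : V → ℝ) (hnn : ∀ v, 0 ≤ h v) (x y : V) : 0 ≤ N.ph h x y :=
  div_nonneg (mul_nonneg (p_nonneg N x y) (hnn y)) (hnn x)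

lemma muh_nonneg (o : V) (h : V → ℝ) (hnn : ∀ v, 0 ≤ h v) (w : V) : 0 ≤ N.muh o h w :=
  mul_nonneg (N.nonneg o w) (hnn w)

lemma HC [MeasurableSpace V] (o : V) (h : V → ℝ) (hnn : ∀ v, 0 ≤ h v)
    (P : MeasureTheory.Measure (ℕ → V)) (hchain : IsChainLaw (N.muh o h) (N.ph h) P)
    (n : ℕ) (u : ℕ → V) : P (Cyl n u) = cylProd N o h n u := by
  have e := hchain n u
  unfold Cyl cylProd mu0 qh
  rw [e, ENNReal.ofReal_mul (muh_nonneg N o h hnn (u 0)),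
    ENNReal.ofReal_prod_of_nonneg (fun i _ => ph_nonneg N h hnn (u i) (u (i+1)))]

lemma cylProd_congr (o : V) (h : V → ℝ) (n : ℕ) {u1 u2 : ℕ → V}
    (he : ∀ i ≤ n, u1 i = u2 i) : cylProd N o h n u1 = cylProd N o h n u2 := by
  unfold cylProd
  rw [he 0 (Nat.zero_le n)]
  congr 1
  apply Finset.prod_congr rfl
  intro i hi
  have hi' := Finset.mem_range.1 hi
  rw [he i (by omega), he (i+1) (by omega)]

lemma cylProd_update (o : V) (h : V → ℝ) (n : ℕ) (u : ℕ → V) (z : V) :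
    cylProd N o h (n+1) (Function.update u (n+1) z)
      = cylProd N o h n u * qh N h (u n) z := by
  unfold cylProd
  rw [Finset.prod_range_succ]
  have h0 : Function.update u (n+1) z 0 = u 0 := Function.update_of_ne (by omega) _ _
  have hn : Function.update u (n+1) z n = u n := Function.update_of_ne (by omega) _ _
  have hn1 : Function.update u (n+1) z (n+1) = z := Function.update_self _ _ _
  rw [h0, hn, hn1, ← mul_assoc]
  congr 2
  apply Finset.prod_congr rfl
  intro i hi
  have hi' := Finset.mem_range.1 hi
  rw [Function.update_of_ne (by omega : i ≠ n+1), Function.update_of_ne (by omega : i+1 ≠ n+1)]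

lemma cylProd_ne_top (o : V) (h : V → ℝ) (n : ℕ) (u : ℕ → V) :
    cylProd N o h n u ≠ ⊤ := by
  unfold cylProd
  apply ENNReal.mul_ne_top ENNReal.ofReal_ne_top
  apply (ENNReal.prod_lt_top ?_).ne
  intro i _
  exact ENNReal.ofReal_lt_top

end TimeRev

namespace TimeRev

variable {V : Type*} (N : Network V)

lemma window_zero (D : Finset V) (n : ℕ) : Window (V := V) D n 0 = Set.univ := by
  ext ω
  simp only [Window, Set.mem_setOf_eq, Set.mem_univ, iff_true]
  intro m h1 h2; omega

lemma window_anti (D : Finset V) (n : ℕ) {k k' : ℕ} (hk : k ≤ k') :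
    Window (V := V) D n k' ⊆ Window D n k := by
  intro ω hw m h1 h2
  exact hw m h1 (by omega)

lemma step_window [MeasurableSpace V] [Countable V] (hms : ∀ s : Set V, MeasurableSet s)
    (o : V) (h : V → ℝ) (hnn : ∀ v, 0 ≤ h v) (D : Finset V)
    (P : MeasureTheory.Measure (ℕ → V)) (hchain : IsChainLaw (N.muh o h) (N.ph h) P) :
    ∀ (k : ℕ) (n : ℕ) (u : ℕ → V),
      P (Cyl n u ∩ Window D n k) = cylProd N o h n u * UD N h D k (u n) := by
  intro k
  induction k with
  | zero =>
    intro n u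
    rw [window_zero, Set.inter_univ, HC N o h hnn P hchain]
    simp [UD]
  | succ k ih =>
    intro n u
    set S : V → Set (ℕ → V) := fun z => if z ∈ D then (∅ : Set (ℕ → V)) else
        Cyl (n+1) (Function.update u (n+1) z) ∩ Window D (n+1) k with hS
    have hdecomp : Cyl n u ∩ Window D n (k+1) = ⋃ z : V, S z := by
      ext ω
      simp only [Set.mem_inter_iff, Set.mem_iUnion, hS]
      constructor
      · rintro ⟨hc, hw⟩
        refine ⟨ω (n+1), ?_⟩
        have hzD : ω (n+1) ∉ D := hw (n+1) (by omega) (by omega)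
        rw [if_neg hzD]
        refine ⟨?_, ?_⟩
        · intro i hi
          by_cases hin : i = n+1
          · subst hin; rw [Function.update_self]
          · rw [Function.update_of_ne hin]
            exact hc i (by omega)
        · intro m h1 h2
          exact hw m (by omega) (by omega)
      · rintro ⟨z, hz⟩
        by_cases hzD : z ∈ D
        · rw [if_pos hzD] at hz; exact absurd hz (Set.notMem_empty ω)
        · rw [if_neg hzD] at hz
          obtain ⟨hc, hw⟩ := hz
          refine ⟨?_, ?_⟩
          · intro i hi
            have := hc i (by omega)
            rwa [Function.update_of_ne (by omega)] at this
          · intro m h1 h2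
            rcases Nat.eq_or_lt_of_le (show n+1 ≤ m by omega) with e | l
            · have := hc (n+1) le_rfl
              rw [Function.update_self] at this
              rw [← e, this]; exact hzD
            · exact hw m l (by omega)
    have hdisj : Pairwise (Function.onFun Disjoint S) := by
      intro z z' hzz
      simp only [Function.onFun, hS]
      by_cases hzD : z ∈ D
      · simp [hzD]
      · by_cases hzD' : z' ∈ D
        · simp [hzD']
        · rw [if_neg hzD, if_neg hzD']
          apply Set.disjoint_left.2
          rintro ω ⟨hc, _⟩ ⟨hc', _⟩
          have e1 := hc (n+1) le_rfl
          have e2 := hc' (n+1) le_rfl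
          rw [Function.update_self] at e1 e2
          exact hzz (e1.symm.trans e2)
    have hmeas : ∀ z, MeasurableSet (S z) := by
      intro z
      simp only [hS]
      by_cases hzD : z ∈ D
      · simp [hzD]
      · rw [if_neg hzD]
        exact (meas_cyl hms _ _).inter (meas_window hms _ _ _)
    rw [hdecomp, MeasureTheory.measure_iUnion hdisj hmeas]
    calc ∑' z, P (S z)
        = ∑' z, (if z ∈ D then 0
            else cylProd N o h n u * (qh N h (u n) z * UD N h D k z)) := by
          apply tsum_congr; intro z
          simp only [hS]
          by_cases hzD : z ∈ D
          · rw [if_pos hzD, if_pos hzD, measure_empty]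
          · rw [if_neg hzD, if_neg hzD, ih (n+1) (Function.update u (n+1) z),
              Function.update_self, cylProd_update, mul_assoc]
      _ = cylProd N o h n u * UD N h D (k+1) (u n) := by
          rw [show UD N h D (k+1) (u n)
              = ∑' z, if z ∈ D then 0 else qh N h (u n) z * UD N h D k z from rfl,
            ← ENNReal.tsum_mul_left]
          apply tsum_congr; intro z
          by_cases hzD : z ∈ D <;> simp [hzD]

lemma tail_measure [MeasurableSpace V] [Countable V] (hms : ∀ s : Set V, MeasurableSet s)
    (o : V) (h : V → ℝ) (hnn : ∀ v, 0 ≤ h v) (D : Finset V)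
    (P : MeasureTheory.Measure (ℕ → V)) [MeasureTheory.IsFiniteMeasure P]
    (hchain : IsChainLaw (N.muh o h) (N.ph h) P) (n : ℕ) (u : ℕ → V) :
    P (Cyl n u ∩ Tail D n) = cylProd N o h n u * ⨅ k, UD N h D k (u n) := by
  have hint : ⋂ k, (Cyl n u ∩ Window D n k) = Cyl n u ∩ Tail D n := by
    ext ω
    simp only [Set.mem_iInter, Set.mem_inter_iff]
    constructor
    · intro hk
      refine ⟨(hk 0).1, fun m hm => (hk (m - n)).2 m hm (by omega)⟩
    · rintro ⟨hc, ht⟩ k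
      exact ⟨hc, fun m h1 _ => ht m h1⟩
  rw [← hint]
  rw [Directed.measure_iInter
    (fun k => ((meas_cyl hms n u).inter (meas_window hms D n k)).nullMeasurableSet)
    (fun k k' => ⟨max k k',
      Set.inter_subset_inter_right _ (window_anti D n (le_max_left k k')),
      Set.inter_subset_inter_right _ (window_anti D n (le_max_right k k'))⟩)
    ⟨0, MeasureTheory.measure_ne_top P _⟩]
  calc ⨅ k, P (Cyl n u ∩ Window D n k)
      = ⨅ k, cylProd N o h n u * UD N h D k (u n) := by
        apply iInf_congr; intro k
        rw [step_window N hms o h hnn D P hchain k n u]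
    _ = cylProd N o h n u * ⨅ k, UD N h D k (u n) := by
        rcases eq_or_ne (cylProd N o h n u) 0 with hc | hc
        · simp [hc]
        · exact (ENNReal.mul_iInf_of_ne hc (cylProd_ne_top N o h n u)).symm

end TimeRev

namespace TimeRev

variable {V : Type*} (N : Network V)

noncomputable def extT (n : ℕ) (u : Fin n → V) (y : V) : ℕ → V :=
  fun i => if hi : i < n then u ⟨i, hi⟩ else y

lemma extT_ge {V : Type*} (n : ℕ) (u : Fin n → V) (y : V) {i : ℕ} (hi : n ≤ i) : extT n u y i = y := by
  unfold extT
  rw [dif_neg (by omega)]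

noncomputable def massT (N : Network V) (o : V) (h : V → ℝ) (n : ℕ) (y : V) : ℝ≥0∞ :=
  ∑' u : Fin n → V, cylProd N o h n (extT n u y)

lemma mu0_eq (o y : V) (h : V → ℝ) :
    mu0 N o h y = cT N o * q N o y * ENNReal.ofReal (h y) := by
  unfold mu0 Network.muh cT q
  rw [← ENNReal.ofReal_mul (cTot_pos N o).le,
    ← ENNReal.ofReal_mul (mul_nonneg (cTot_pos N o).le (p_nonneg N o y))]
  congr 1
  rw [mul_comm (N.cTot o) (N.p o y), p_mul_cTot]

lemma Hq (h : V → ℝ) (hnn : ∀ v, 0 ≤ h v) (z y : V) :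
    ENNReal.ofReal (h z) * qh N h z y
      = (if z ∈ {u | h u = 0} then 0 else q N z y * ENNReal.ofReal (h y)) := by
  by_cases hz : h z = 0
  · rw [if_pos (show z ∈ {u | h u = 0} from hz), hz]
    simp
  · rw [if_neg (show z ∉ {u | h u = 0} from hz)]
    unfold qh Network.ph q
    rw [← ENNReal.ofReal_mul (hnn z), ← ENNReal.ofReal_mul (p_nonneg N z y)]
    congr 1
    field_simp

lemma mker_zero (o : V) (h : V → ℝ) (y : V) : mker N o h 0 y = mu0 N o h y := by
  unfold mker
  rw [mu0_eq N o y h]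
  congr 2
  simp only [AZ]
  rw [tsum_mul_delta y (q N o) 1, mul_one]

lemma mker_succ (o : V) (h : V → ℝ) (hnn : ∀ v, 0 ≤ h v) (n : ℕ) (y : V) :
    mker N o h (n+1) y = ∑' z, mker N o h n z * qh N h z y := by
  symm
  unfold mker
  calc ∑' z, (cT N o * (∑' w, q N o w * AZ N {u | h u = 0} n w z) * ENNReal.ofReal (h z))
        * qh N h z y
      = ∑' z, cT N o * ((∑' w, q N o w * AZ N {u | h u = 0} n w z)
          * (if z ∈ {u | h u = 0} then 0 else q N z y * ENNReal.ofReal (h y))) := by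
        apply tsum_congr; intro z
        rw [mul_assoc, mul_assoc, Hq N h hnn z y]
    _ = cT N o * ∑' z, ((∑' w, q N o w * AZ N {u | h u = 0} n w z)
          * (if z ∈ {u | h u = 0} then 0 else q N z y * ENNReal.ofReal (h y))) :=
        ENNReal.tsum_mul_left
    _ = cT N o * ∑' z, ∑' w, q N o w * (AZ N {u | h u = 0} n w z
          * (if z ∈ {u | h u = 0} then 0 else q N z y * ENNReal.ofReal (h y))) := by
        congr 1
        apply tsum_congr; intro z
        rw [← ENNReal.tsum_mul_right]
        apply tsum_congr; intro w; ring
    _ = cT N o * ∑' w, q N o w * ∑' z, (AZ N {u | h u = 0} n w z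
          * (if z ∈ {u | h u = 0} then 0 else q N z y * ENNReal.ofReal (h y))) := by
        congr 1
        rw [ENNReal.tsum_comm]
        apply tsum_congr; intro w
        rw [ENNReal.tsum_mul_left]
    _ = cT N o * ∑' w, q N o w * (AZ N {u | h u = 0} (n+1) w y * ENNReal.ofReal (h y)) := by
        congr 1
        apply tsum_congr; intro w
        congr 1
        have e : ∀ z, AZ N {u | h u = 0} n w z
            * (if z ∈ {u | h u = 0} then 0 else q N z y * ENNReal.ofReal (h y))
            = (if z ∈ {u | h u = 0} then 0 else AZ N {u | h u = 0} n w z * q N z y)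
              * ENNReal.ofReal (h y) := by
          intro z
          by_cases hz : z ∈ {u | h u = 0}
          · rw [if_pos hz, if_pos hz]; simp
          · rw [if_neg hz, if_neg hz]; ring
        rw [tsum_congr e, ENNReal.tsum_mul_right]
        congr 1
    _ = cT N o * (∑' w, q N o w * AZ N {u | h u = 0} (n+1) w y) * ENNReal.ofReal (h y) := by
        rw [mul_assoc]
        congr 1
        rw [show (∑' w, q N o w * (AZ N {u | h u = 0} (n+1) w y * ENNReal.ofReal (h y)))
            = ∑' w, (q N o w * AZ N {u | h u = 0} (n+1) w y) * ENNReal.ofReal (h y) from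
          tsum_congr fun w => by ring, ENNReal.tsum_mul_right]

lemma massT_zero (o : V) (h : V → ℝ) (y : V) : massT N o h 0 y = mu0 N o h y := by
  unfold massT
  haveI : Subsingleton (Fin 0 → V) := ⟨fun a b => funext fun i => i.elim0⟩
  rw [tsum_eq_single (fun i => i.elim0) (fun b hb => absurd (Subsingleton.elim b _) hb)]
  unfold cylProd
  rw [extT_ge 0 _ y (le_refl 0)]
  simp

lemma massT_succ (o : V) (h : V → ℝ) (n : ℕ) (y : V) :
    massT N o h (n+1) y = ∑' z, massT N o h n z * qh N h z y := by
  unfold massT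
  rw [← Equiv.tsum_eq (Fin.snocEquiv (fun _ => V))
    (fun u => cylProd N o h (n+1) (extT (n+1) u y)),
    ENNReal.tsum_prod (f := fun z u' => cylProd N o h (n+1)
      (extT (n+1) (Fin.snocEquiv (fun _ => V) (z, u')) y))]
  apply tsum_congr; intro z
  calc ∑' u' : Fin n → V, cylProd N o h (n+1) (extT (n+1) (Fin.snocEquiv (fun _ => V) (z, u')) y)
      = ∑' u' : Fin n → V, cylProd N o h n (extT n u' z) * qh N h z y := by
        apply tsum_congr; intro u'
        have key : cylProd N o h (n+1) (extT (n+1) (Fin.snocEquiv (fun _ => V) (z, u')) y)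
            = cylProd N o h (n+1) (Function.update (extT n u' z) (n+1) y) := by
          apply cylProd_congr
          intro i hi
          by_cases hin : i = n+1
          · subst hin
            rw [Function.update_self, extT_ge (n+1) _ y (le_refl (n+1))]
          · have hi' : i ≤ n := by omega
            rw [Function.update_of_ne hin]
            unfold extT
            by_cases hilt : i < n
            · rw [dif_pos (by omega : i < n+1), dif_pos hilt]
              rw [Fin.snocEquiv_apply]
              have e : (⟨i, by omega⟩ : Fin (n+1)) = Fin.castSucc ⟨i, hilt⟩ := rfl
              rw [e, Fin.snoc_castSucc]
            · have hieq : i = n := by omega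
              subst hieq
              rw [dif_pos (by omega : i < i+1), dif_neg hilt]
              rw [Fin.snocEquiv_apply]
              have e : (⟨i, by omega⟩ : Fin (i+1)) = Fin.last i := rfl
              rw [e, Fin.snoc_last]
        rw [key, cylProd_update]
        congr 2
        exact extT_ge n u' z (le_refl n)
    _ = massT N o h n z * qh N h z y := ENNReal.tsum_mul_right

lemma massT_eq_mker (o : V) (h : V → ℝ) (hnn : ∀ v, 0 ≤ h v) :
    ∀ n y, massT N o h n y = mker N o h n y := by
  intro n
  induction n with
  | zero => intro y; rw [massT_zero, mker_zero]
  | succ n ih =>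
    intro y
    rw [massT_succ, mker_succ N o h hnn]
    exact tsum_congr fun z => by rw [ih]

end TimeRev

namespace TimeRev

variable {V : Type*} (N : Network V)

lemma CP (o : V) (h : V → ℝ) (hnn : ∀ v, 0 ≤ h v) :
    ∀ (ℓ : ℕ) (v : ℕ → V), (∀ i ≤ ℓ, 0 < h (v i)) →
    cylProd N o h ℓ v = ENNReal.ofReal (h (v ℓ)) * cT N (v ℓ)
      * ((∏ i ∈ Finset.range ℓ, q N (v (i+1)) (v i)) * q N (v 0) o) := by
  intro ℓ
  induction ℓ with
  | zero =>
    intro v _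
    unfold cylProd
    rw [Finset.prod_range_zero, mul_one, Finset.prod_range_zero, one_mul, mu0_eq N o (v 0) h,
      rev N o (v 0)]
    ring
  | succ ℓ ih =>
    intro v hvS
    have hstep : cylProd N o h (ℓ+1) v = cylProd N o h ℓ v * qh N h (v ℓ) (v (ℓ+1)) := by
      unfold cylProd; rw [Finset.prod_range_succ, mul_assoc]
    rw [hstep, ih v (fun i hi => hvS i (by omega)), Finset.prod_range_succ]
    have h1 : ENNReal.ofReal (h (v ℓ)) * qh N h (v ℓ) (v (ℓ+1))
        = q N (v ℓ) (v (ℓ+1)) * ENNReal.ofReal (h (v (ℓ+1))) := by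
      rw [Hq N h hnn]
      rw [if_neg (show v ℓ ∉ {u | h u = 0} from fun e => by
        have := hvS ℓ (by omega)
        rw [show h (v ℓ) = 0 from e] at this
        exact lt_irrefl 0 this)]
    have h2 : cT N (v ℓ) * q N (v ℓ) (v (ℓ+1)) = cT N (v (ℓ+1)) * q N (v (ℓ+1)) (v ℓ) :=
      rev N _ _
    calc ENNReal.ofReal (h (v ℓ)) * cT N (v ℓ)
          * ((∏ i ∈ Finset.range ℓ, q N (v (i+1)) (v i)) * q N (v 0) o)
          * qh N h (v ℓ) (v (ℓ+1))
        = (ENNReal.ofReal (h (v ℓ)) * qh N h (v ℓ) (v (ℓ+1))) * cT N (v ℓ)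
          * ((∏ i ∈ Finset.range ℓ, q N (v (i+1)) (v i)) * q N (v 0) o) := by ring
      _ = (q N (v ℓ) (v (ℓ+1)) * ENNReal.ofReal (h (v (ℓ+1)))) * cT N (v ℓ)
          * ((∏ i ∈ Finset.range ℓ, q N (v (i+1)) (v i)) * q N (v 0) o) := by rw [h1]
      _ = (cT N (v ℓ) * q N (v ℓ) (v (ℓ+1))) * ENNReal.ofReal (h (v (ℓ+1)))
          * ((∏ i ∈ Finset.range ℓ, q N (v (i+1)) (v i)) * q N (v 0) o) := by ring
      _ = (cT N (v (ℓ+1)) * q N (v (ℓ+1)) (v ℓ)) * ENNReal.ofReal (h (v (ℓ+1)))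
          * ((∏ i ∈ Finset.range ℓ, q N (v (i+1)) (v i)) * q N (v 0) o) := by rw [h2]
      _ = ENNReal.ofReal (h (v (ℓ+1))) * cT N (v (ℓ+1))
          * ((∏ i ∈ Finset.range ℓ, q N (v (i+1)) (v i)) * q N (v (ℓ+1)) (v ℓ)
            * q N (v 0) o) := by ring

end TimeRev

/-- Time reversal of the `h`-process: for every finite path
`(v_0, …, v_ℓ)` in `S_h` with `v_ℓ ∈ D`, the probability that the `h`-process follows the
path and then leaves `D` forever equals the probability that the network random walk,
started from the law `ν` of the last-exit vertex `Y_L`, traverses the reversed path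
`(v_ℓ, …, v_0, o)` and stops at `o`. -/
theorem hprocess_time_reversal {V : Type*} [MeasurableSpace V]
    (hms : ∀ s : Set V, MeasurableSet s)
    (N : Network V) (hrec : N.Recurrent) (o : V) (h : V → ℝ) (hpot : N.IsPotential o h)
    (D : Finset V) (hoD : o ∈ D) (hsupp : ∀ v, 0 < N.muh o h v → v ∈ D)
    (P : MeasureTheory.Measure (ℕ → V)) [MeasureTheory.IsProbabilityMeasure P]
    (hchain : IsChainLaw (N.muh o h) (N.ph h) P)
    (ℓ : ℕ) (v : ℕ → V) (hvS : ∀ i ≤ ℓ, 0 < h (v i)) (hvD : v ℓ ∈ D) :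
    P {ω | (∀ i ≤ ℓ, ω i = v i) ∧ ∀ m, ℓ < m → ω m ∉ D} =
      P {ω | ∃ n, ω n = v ℓ ∧ ∀ m, n < m → ω m ∉ D} *
        ENNReal.ofReal ((∏ i ∈ Finset.range ℓ, N.p (v (i + 1)) (v i)) * N.p (v 0) o) := by
  classical
  have hnn : ∀ u, 0 ≤ h u := hpot.1
  haveI : Countable V := TimeRev.countableV N o
  set β : ℝ≥0∞ := ⨅ k, TimeRev.UD N h D k (v ℓ) with hβ
  have hvl_pos : 0 < h (v ℓ) := hvS ℓ le_rfl
  -- the left-hand side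
  have hLHS : P {ω | (∀ i ≤ ℓ, ω i = v i) ∧ ∀ m, ℓ < m → ω m ∉ D}
      = TimeRev.cylProd N o h ℓ v * β := by
    have e : {ω : ℕ → V | (∀ i ≤ ℓ, ω i = v i) ∧ ∀ m, ℓ < m → ω m ∉ D}
        = TimeRev.Cyl ℓ v ∩ TimeRev.Tail D ℓ := rfl
    rw [e, TimeRev.tail_measure N hms o h hnn D P hchain ℓ v]
  -- the right-hand side event
  have hRHS : P {ω | ∃ n, ω n = v ℓ ∧ ∀ m, n < m → ω m ∉ D}
      = (ENNReal.ofReal (h (v ℓ)) * TimeRev.cT N (v ℓ)) * β := by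
    set B : ℕ → Set (ℕ → V) := fun n => {ω | ω n = v ℓ} ∩ TimeRev.Tail D n with hB
    have huni : {ω : ℕ → V | ∃ n, ω n = v ℓ ∧ ∀ m, n < m → ω m ∉ D} = ⋃ n, B n := by
      ext ω
      simp only [Set.mem_setOf_eq, Set.mem_iUnion, hB, Set.mem_inter_iff]
      rfl
    have hdisjB : Pairwise (Function.onFun Disjoint B) := by
      have key : ∀ n n', n < n' → Disjoint (B n) (B n') := by
        intro n n' hlt
        apply Set.disjoint_left.2
        rintro ω ⟨_, h2⟩ ⟨h1', _⟩
        exact (h2 n' hlt) (by rw [show ω n' = v ℓ from h1']; exact hvD)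
      intro n n' hne
      rcases lt_or_gt_of_ne hne with hl | hl
      · exact key n n' hl
      · exact (key n' n hl).symm
    have hmeasB : ∀ n, MeasurableSet (B n) := fun n =>
      (TimeRev.meas_pre hms n {v ℓ}).inter (TimeRev.meas_tail hms D n)
    have hPBn : ∀ n, P (B n) = TimeRev.massT N o h n (v ℓ) * β := by
      intro n
      set C : (Fin n → V) → Set (ℕ → V) := fun u =>
        TimeRev.Cyl n (TimeRev.extT n u (v ℓ)) ∩ TimeRev.Tail D n with hC
      have huniC : B n = ⋃ u : Fin n → V, C u := by
        ext ω
        simp only [hB, hC, Set.mem_inter_iff, Set.mem_iUnion, Set.mem_setOf_eq]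
        constructor
        · rintro ⟨h1, h2⟩
          refine ⟨fun i => ω i, ⟨?_, h2⟩⟩
          intro i hi
          unfold TimeRev.extT
          by_cases hin : i < n
          · rw [dif_pos hin]
          · rw [dif_neg hin]
            have : i = n := by omega
            rw [this]; exact h1
        · rintro ⟨u, ⟨h1, h2⟩⟩
          refine ⟨?_, h2⟩
          have := h1 n le_rfl
          rwa [TimeRev.extT_ge n u _ le_rfl] at this
      have hdisjC : Pairwise (Function.onFun Disjoint C) := by
        intro u u' hne
        have : ∃ i : Fin n, u i ≠ u' i := by
          by_contra hc
          push_neg at hc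
          exact hne (funext hc)
        obtain ⟨i, hi⟩ := this
        apply Set.disjoint_left.2
        rintro ω ⟨h1, _⟩ ⟨h1', _⟩
        have e1 := h1 i (le_of_lt i.2)
        have e1' := h1' i (le_of_lt i.2)
        apply hi
        have eu : TimeRev.extT n u (v ℓ) i = u i := by
          unfold TimeRev.extT; rw [dif_pos i.2]
        have eu' : TimeRev.extT n u' (v ℓ) i = u' i := by
          unfold TimeRev.extT; rw [dif_pos i.2]
        rw [← eu, ← eu', ← e1, ← e1']
      have hmeasC : ∀ u, MeasurableSet (C u) := fun u =>
        (TimeRev.meas_cyl hms _ _).inter (TimeRev.meas_tail hms D n)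
      rw [huniC, MeasureTheory.measure_iUnion hdisjC hmeasC]
      calc ∑' u : Fin n → V, P (C u)
          = ∑' u : Fin n → V, TimeRev.cylProd N o h n (TimeRev.extT n u (v ℓ)) * β := by
            apply tsum_congr; intro u
            rw [hC]
            rw [TimeRev.tail_measure N hms o h hnn D P hchain n (TimeRev.extT n u (v ℓ)),
              TimeRev.extT_ge n u _ le_rfl]
        _ = TimeRev.massT N o h n (v ℓ) * β := ENNReal.tsum_mul_right
    rw [huni, MeasureTheory.measure_iUnion hdisjB hmeasB]
    calc ∑' n, P (B n) = ∑' n, TimeRev.massT N o h n (v ℓ) * β := tsum_congr hPBn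
      _ = (∑' n, TimeRev.massT N o h n (v ℓ)) * β := ENNReal.tsum_mul_right
      _ = (∑' n, TimeRev.mker N o h n (v ℓ)) * β := by
          rw [tsum_congr (fun n => TimeRev.massT_eq_mker N o h hnn n (v ℓ))]
      _ = (ENNReal.ofReal (h (v ℓ)) * TimeRev.cT N (v ℓ)) * β := by
          rw [TimeRev.mker_total N hrec o h hpot (v ℓ) hvl_pos]
  have hofr : ENNReal.ofReal ((∏ i ∈ Finset.range ℓ, N.p (v (i + 1)) (v i)) * N.p (v 0) o)
      = (∏ i ∈ Finset.range ℓ, TimeRev.q N (v (i+1)) (v i)) * TimeRev.q N (v 0) o := by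
    rw [ENNReal.ofReal_mul (Finset.prod_nonneg (fun i _ => TimeRev.p_nonneg N _ _)),
      ENNReal.ofReal_prod_of_nonneg (fun i _ => TimeRev.p_nonneg N _ _)]
    rfl
  rw [hLHS, hRHS, TimeRev.CP N o h hnn ℓ v hvS, hofr]
  ring
end

section
/- In a recurrent network, for a finite set A containing o with |A|≥2, the matrix M = (g_o(x,y))_{x,y ∈ A∖{o}} is invertible, and for every vertex v≠o the harmonic measure satisfies ω_v^A(y) = det(M^{v,y})/det(M), where M^{v,y} is M with its y-column replaced by (g_o(x,v))_{x∈A∖{o}}. -/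
open scoped Classical
open Filter Topology MeasureTheory ProbabilityTheory

namespace Network

variable {V : Type*} (N : Network V)

/-- Neighbours of `x`. -/
noncomputable def nbr (x : V) : Finset V := (N.locFin x).toFinset

lemma mem_nbr {x y : V} : y ∈ N.nbr x ↔ 0 < N.c x y := (N.locFin x).mem_toFinset

lemma c_eq_zero_of_not_mem_nbr {x y : V} (h : y ∉ N.nbr x) : N.c x y = 0 :=
  le_antisymm (not_lt.1 fun hc => h (N.mem_nbr.2 hc)) (N.nonneg x y)

lemma summable_c (x : V) : Summable (N.c x) :=
  summable_of_ne_finset_zero (s := N.nbr x) fun _ hb => N.c_eq_zero_of_not_mem_nbr hb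

lemma cTot_pos (x : V) : 0 < N.cTot x := N.deg_pos x

lemma cTot_ne_zero (x : V) : N.cTot x ≠ 0 := (N.cTot_pos x).ne'

lemma p_nonneg (x y : V) : 0 ≤ N.p x y := div_nonneg (N.nonneg x y) (N.cTot_pos x).le

lemma p_eq_zero_of_not_mem_nbr {x y : V} (h : y ∉ N.nbr x) : N.p x y = 0 := by
  simp [Network.p, N.c_eq_zero_of_not_mem_nbr h]

lemma p_eq_zero_of_not_mem_nbr' {x y : V} (h : x ∉ N.nbr y) : N.p x y = 0 := by
  have : y ∉ N.nbr x := fun hy => h (N.mem_nbr.2 (N.symm y x ▸ N.mem_nbr.1 hy))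
  exact N.p_eq_zero_of_not_mem_nbr this

lemma p_pos {x y : V} (h : 0 < N.c x y) : 0 < N.p x y := div_pos h (N.cTot_pos x)

lemma cTot_mul_p (x y : V) : N.cTot x * N.p x y = N.c x y := by
  rw [Network.p, mul_div_cancel₀ _ (N.cTot_ne_zero x)]

lemma summable_p (x : V) : Summable (N.p x) :=
  summable_of_ne_finset_zero (s := N.nbr x) fun _ hb => N.p_eq_zero_of_not_mem_nbr hb

lemma tsum_p (x : V) : ∑' y, N.p x y = 1 := by
  have : ∀ y, N.p x y = N.c x y / N.cTot x := fun y => rfl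
  simp only [this]
  rw [tsum_div_const]
  exact div_self (N.cTot_ne_zero x)

lemma sum_p_le_one (x : V) (s : Finset V) : ∑ y ∈ s, N.p x y ≤ 1 := by
  rw [← N.tsum_p x]
  exact Summable.sum_le_tsum s (fun y _ => N.p_nonneg x y) (N.summable_p x)

end Network

namespace Network

variable {V : Type*} (N : Network V)

lemma avoid_zero_def (S : Set V) (x y : V) :
    N.avoid S 0 x y = if x = y ∧ x ∉ S then 1 else 0 := rfl

lemma avoid_succ_def (S : Set V) (n : ℕ) (x y : V) :
    N.avoid S (n + 1) x y = if y ∈ S then 0 else ∑' z, N.avoid S n x z * N.p z y := rfl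

lemma tsum_mul_p_eq_sum (f : V → ℝ) (y : V) :
    ∑' z, f z * N.p z y = ∑ z ∈ N.nbr y, f z * N.p z y :=
  tsum_eq_sum fun z hz => by rw [N.p_eq_zero_of_not_mem_nbr' hz, mul_zero]

lemma tsum_p_mul_eq_sum (f : V → ℝ) (x : V) :
    ∑' z, N.p x z * f z = ∑ z ∈ N.nbr x, N.p x z * f z :=
  tsum_eq_sum fun z hz => by rw [N.p_eq_zero_of_not_mem_nbr hz, zero_mul]

lemma avoid_nonneg (S : Set V) (n : ℕ) (x y : V) : 0 ≤ N.avoid S n x y := by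
  induction n generalizing y with
  | zero => rw [avoid_zero_def]; positivity
  | succ n ih =>
    rw [avoid_succ_def]
    split
    · exact le_rfl
    · exact tsum_nonneg fun z => mul_nonneg (ih z) (N.p_nonneg z y)

lemma avoid_mem_right (S : Set V) (n : ℕ) (x y : V) (hy : y ∈ S) : N.avoid S n x y = 0 := by
  cases n with
  | zero => rw [avoid_zero_def, if_neg]; rintro ⟨rfl, h⟩; exact h hy
  | succ n => rw [avoid_succ_def, if_pos hy]

lemma avoid_mem_left (S : Set V) (n : ℕ) (x y : V) (hx : x ∈ S) : N.avoid S n x y = 0 := by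
  induction n generalizing y with
  | zero => rw [avoid_zero_def, if_neg]; rintro ⟨rfl, h⟩; exact h hx
  | succ n ih =>
    rw [avoid_succ_def]
    split
    · rfl
    · simp only [ih, zero_mul]; exact tsum_zero

/-- combinatorial ball of radius `n`. -/
noncomputable def ball : ℕ → V → Finset V
  | 0, x => {x}
  | n + 1, x => (ball n x).biUnion N.nbr

lemma avoid_support {S : Set V} {n : ℕ} {x y : V} (h : N.avoid S n x y ≠ 0) :
    y ∈ N.ball n x := by
  induction n generalizing y with
  | zero =>
    rw [avoid_zero_def] at h
    have : x = y := by by_contra hxy; exact h (by simp [hxy])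
    simp [ball, this]
  | succ n ih =>
    rw [avoid_succ_def] at h
    have h' : (∑' z, N.avoid S n x z * N.p z y) ≠ 0 := by
      intro h0; apply h; split <;> simp [h0]
    have : ∃ z, N.avoid S n x z * N.p z y ≠ 0 := by
      by_contra hz
      push_neg at hz
      exact h' (by simp [hz, tsum_zero])
    obtain ⟨z, hz⟩ := this
    have h1 : N.avoid S n x z ≠ 0 := fun h0 => hz (by rw [h0, zero_mul])
    have h2 : N.p z y ≠ 0 := fun h0 => hz (by rw [h0, mul_zero])
    have hzy : y ∈ N.nbr z := by
      by_contra hc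
      exact h2 (N.p_eq_zero_of_not_mem_nbr hc)
    exact Finset.mem_biUnion.2 ⟨z, ih h1, hzy⟩

lemma summable_avoid_snd (S : Set V) (n : ℕ) (x : V) : Summable (N.avoid S n x) :=
  summable_of_ne_finset_zero (s := N.ball n x) fun b hb => by
    by_contra h; exact hb (N.avoid_support h)

lemma tsum_avoid_eq_sum (S : Set V) (n : ℕ) (x : V) {s : Finset V} (hs : N.ball n x ⊆ s) :
    ∑' y, N.avoid S n x y = ∑ y ∈ s, N.avoid S n x y :=
  tsum_eq_sum fun b hb => by
    by_contra h; exact hb (hs (N.avoid_support h))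

lemma avoid_congr {S S' : Set V} (h : S = S') (n : ℕ) (x y : V) :
    N.avoid S n x y = N.avoid S' n x y := by rw [h]

/-- First-step recursion for `avoid`. -/
lemma avoid_fs (S : Set V) (n : ℕ) {x : V} (y : V) (hx : x ∉ S) :
    N.avoid S (n + 1) x y = ∑' z, N.p x z * N.avoid S n z y := by
  induction n generalizing y with
  | zero =>
    rw [avoid_succ_def]
    have hL : (fun z => N.avoid S 0 x z * N.p z y) = fun z => if z = x then N.p x y else 0 := by
      funext z
      rw [avoid_zero_def]
      by_cases hzx : z = x
      · subst hzx; simp [hx]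
      · have hns : ¬(x = z ∧ x ∉ S) := fun h => hzx h.1.symm
        simp [hns, hzx]
    have hR : (fun z => N.p x z * N.avoid S 0 z y) =
        fun z => if z = y then (if y ∈ S then 0 else N.p x y) else 0 := by
      funext z
      rw [avoid_zero_def]
      by_cases hzy : z = y
      · subst hzy; by_cases hyS : z ∈ S <;> simp [hyS]
      · simp [hzy]
    rw [hR, tsum_ite_eq]
    split
    · rfl
    · rw [hL, tsum_ite_eq]
  | succ n ih =>
    rw [avoid_succ_def]
    by_cases hyS : y ∈ S
    · rw [if_pos hyS]
      have : (fun z => N.p x z * N.avoid S (n + 1) z y) = fun _ => 0 := by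
        funext z; rw [avoid_mem_right _ _ _ _ _ hyS, mul_zero]
      rw [this, tsum_zero]
    · rw [if_neg hyS]
      have h1 : ∀ z, N.avoid S (n + 1) x z = ∑ w ∈ N.nbr x, N.p x w * N.avoid S n w z := by
        intro z; rw [ih z, N.tsum_p_mul_eq_sum]
      calc ∑' z, N.avoid S (n + 1) x z * N.p z y
          = ∑ z ∈ N.nbr y, N.avoid S (n + 1) x z * N.p z y := N.tsum_mul_p_eq_sum _ y
        _ = ∑ z ∈ N.nbr y, ∑ w ∈ N.nbr x, N.p x w * N.avoid S n w z * N.p z y := by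
            simp only [h1, Finset.sum_mul]
        _ = ∑ w ∈ N.nbr x, N.p x w * ∑ z ∈ N.nbr y, N.avoid S n w z * N.p z y := by
            rw [Finset.sum_comm]
            congr 1; funext w
            rw [Finset.mul_sum]
            congr 1; funext z
            ring
        _ = ∑ w ∈ N.nbr x, N.p x w * N.avoid S (n + 1) w y := by
            congr 1; funext w
            rw [avoid_succ_def, if_neg hyS, N.tsum_mul_p_eq_sum]
        _ = ∑' w, N.p x w * N.avoid S (n + 1) w y := (N.tsum_p_mul_eq_sum _ x).symm

/-- Time reversal for `avoid`. -/
lemma avoid_rev (S : Set V) (n : ℕ) (x y : V) :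
    N.avoid S n x y * N.cTot x = N.avoid S n y x * N.cTot y := by
  induction n generalizing x y with
  | zero =>
    by_cases hxy : x = y
    · subst hxy; rfl
    · rw [avoid_zero_def, avoid_zero_def, if_neg (by tauto), if_neg (by tauto), zero_mul,
        zero_mul]
  | succ n ih =>
    by_cases hyS : y ∈ S
    · rw [avoid_mem_right _ _ _ _ _ hyS, avoid_mem_left _ _ _ _ _ hyS, zero_mul, zero_mul]
    · by_cases hxS : x ∈ S
      · rw [avoid_mem_right _ _ _ _ _ hxS, avoid_mem_left _ _ _ _ _ hxS, zero_mul, zero_mul]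
      · rw [avoid_succ_def, if_neg hyS, N.tsum_mul_p_eq_sum, Finset.sum_mul,
          N.avoid_fs S n x hyS, N.tsum_p_mul_eq_sum, Finset.sum_mul]
        apply Finset.sum_congr rfl
        intro z _
        have h2 : N.cTot z * N.p z y = N.c z y := N.cTot_mul_p z y
        have h3 : N.cTot y * N.p y z = N.c y z := N.cTot_mul_p y z
        have h4 : N.c z y = N.c y z := N.symm z y
        calc N.avoid S n x z * N.p z y * N.cTot x
            = (N.avoid S n x z * N.cTot x) * N.p z y := by ring
          _ = (N.avoid S n z x * N.cTot z) * N.p z y := by rw [ih x z]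
          _ = N.avoid S n z x * (N.cTot z * N.p z y) := by ring
          _ = N.avoid S n z x * N.c y z := by rw [h2, h4]
          _ = N.p y z * N.avoid S n z x * N.cTot y := by rw [← h3]; ring

end Network

namespace Network

variable {V : Type*} (N : Network V)

/-- `ent C D v k x`: probability that the walk from `v` first enters `↑C ∪ D` at time `k`,
doing so at the point `x`. -/
noncomputable def ent (C : Finset V) (D : Set V) (v : V) : ℕ → V → ℝ
  | 0, x => if v = x ∧ v ∈ C ∧ v ∉ D then 1 else 0
  | k + 1, x => ∑' w, N.avoid (↑C ∪ D) k v w * N.p w x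

lemma ent_zero_def (C : Finset V) (D : Set V) (v x : V) :
    N.ent C D v 0 x = if v = x ∧ v ∈ C ∧ v ∉ D then 1 else 0 := rfl

lemma ent_succ_def (C : Finset V) (D : Set V) (v : V) (k : ℕ) (x : V) :
    N.ent C D v (k + 1) x = ∑' w, N.avoid (↑C ∪ D) k v w * N.p w x := rfl

lemma ent_nonneg (C : Finset V) (D : Set V) (v : V) (k : ℕ) (x : V) : 0 ≤ N.ent C D v k x := by
  cases k with
  | zero => rw [ent_zero_def]; positivity
  | succ k =>
    rw [ent_succ_def]
    exact tsum_nonneg fun w => mul_nonneg (N.avoid_nonneg _ _ _ _) (N.p_nonneg w x)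

lemma ent_succ_eq_zero (C : Finset V) (D : Set V) {v : V} (hv : v ∈ (↑C ∪ D : Set V))
    (k : ℕ) (x : V) : N.ent C D v (k + 1) x = 0 := by
  rw [ent_succ_def]
  have : ∀ w, N.avoid (↑C ∪ D) k v w * N.p w x = 0 := fun w => by
    rw [N.avoid_mem_left _ _ _ _ hv, zero_mul]
  rw [tsum_congr fun w => this w, tsum_zero]

lemma ent_zero_eq_zero_of_not_mem (C : Finset V) (D : Set V) {v : V} (hv : v ∉ C) (x : V) :
    N.ent C D v 0 x = 0 := by
  rw [ent_zero_def, if_neg]; tauto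

/-- First-step recursion for `ent`. -/
lemma ent_fs (C : Finset V) (D : Set V) {v : V} (hv : v ∉ (↑C ∪ D : Set V)) (k : ℕ)
    {x : V} (hxC : x ∈ C) (hxD : x ∉ D) :
    N.ent C D v (k + 1) x = ∑' w, N.p v w * N.ent C D w k x := by
  have hvD : v ∉ D := fun h => hv (Set.mem_union_right _ h)
  have hvS : v ∉ (↑C ∪ D : Set V) := hv
  cases k with
  | zero =>
    rw [ent_succ_def]
    have hL : (fun w => N.avoid (↑C ∪ D) 0 v w * N.p w x) =
        fun w => if w = v then N.p v x else 0 := by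
      funext w
      rw [avoid_zero_def]
      by_cases hwv : w = v
      · subst hwv; rw [if_pos ⟨rfl, hvS⟩, one_mul, if_pos rfl]
      · have h0 : ¬(v = w ∧ v ∉ (↑C ∪ D : Set V)) := fun h => hwv h.1.symm
        rw [if_neg h0, zero_mul, if_neg hwv]
    have hR : (fun w => N.p v w * N.ent C D w 0 x) =
        fun w => if w = x then N.p v x else 0 := by
      funext w
      rw [ent_zero_def]
      by_cases hwx : w = x
      · subst hwx; rw [if_pos ⟨rfl, hxC, hxD⟩, mul_one, if_pos rfl]
      · have h0 : ¬(w = x ∧ w ∈ C ∧ w ∉ D) := fun h => hwx h.1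
        rw [if_neg h0, mul_zero, if_neg hwx]
    rw [hL, hR, tsum_ite_eq, tsum_ite_eq]
  | succ k =>
    rw [ent_succ_def]
    have h1 : ∀ w, N.avoid (↑C ∪ D) (k + 1) v w = ∑ z ∈ N.nbr v, N.p v z * N.avoid (↑C ∪ D) k z w := by
      intro w; rw [N.avoid_fs _ _ _ hvS, N.tsum_p_mul_eq_sum]
    calc ∑' w, N.avoid (↑C ∪ D) (k + 1) v w * N.p w x
        = ∑ w ∈ N.nbr x, N.avoid (↑C ∪ D) (k + 1) v w * N.p w x := N.tsum_mul_p_eq_sum _ x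
      _ = ∑ w ∈ N.nbr x, ∑ z ∈ N.nbr v, N.p v z * N.avoid (↑C ∪ D) k z w * N.p w x := by
          simp only [h1, Finset.sum_mul]
      _ = ∑ z ∈ N.nbr v, N.p v z * ∑ w ∈ N.nbr x, N.avoid (↑C ∪ D) k z w * N.p w x := by
          rw [Finset.sum_comm]
          congr 1; funext z
          rw [Finset.mul_sum]
          congr 1; funext w
          ring
      _ = ∑ z ∈ N.nbr v, N.p v z * N.ent C D z (k + 1) x := by
          congr 1; funext z
          rw [ent_succ_def, N.tsum_mul_p_eq_sum]
      _ = ∑' z, N.p v z * N.ent C D z (k + 1) x := (N.tsum_p_mul_eq_sum _ v).symm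

end Network

namespace Network

variable {V : Type*} (N : Network V)

lemma ent_drop (C : Finset V) (D : Set V) (v : V) (n : ℕ) :
    (∑' w, N.avoid (↑C ∪ D) (n + 1) v w) + ∑ x ∈ C.filter (fun x => x ∉ D), N.ent C D v (n + 1) x
      ≤ ∑' w, N.avoid (↑C ∪ D) n v w := by
  classical
  set S : Set V := ↑C ∪ D with hS
  set t := N.ball n v with ht
  set C' := C.filter (fun x => x ∉ D) with hC'
  set u := (N.ball (n + 1) v).filter (fun y => y ∉ S) ∪ C' with hu
  have hA : ∀ y, (∑' z, N.avoid S n v z * N.p z y) = ∑ z ∈ t, N.avoid S n v z * N.p z y :=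
    fun y => tsum_eq_sum fun z hz => by
      rw [(by by_contra h; exact hz (N.avoid_support h) : N.avoid S n v z = 0), zero_mul]
  have hT1 : (∑' w, N.avoid S (n + 1) v w)
      = ∑ y ∈ (N.ball (n + 1) v).filter (fun y => y ∉ S), ∑' z, N.avoid S n v z * N.p z y := by
    rw [N.tsum_avoid_eq_sum S (n + 1) v (Finset.Subset.refl _), Finset.sum_filter]
    apply Finset.sum_congr rfl
    intro y _
    rw [avoid_succ_def]
    by_cases hyS : y ∈ S <;> simp [hyS]
  have hE : ∀ x, N.ent C D v (n + 1) x = ∑' z, N.avoid S n v z * N.p z x := fun x => rfl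
  have hdisj : Disjoint ((N.ball (n + 1) v).filter (fun y => y ∉ S)) C' := by
    rw [Finset.disjoint_left]
    intro a ha haC
    exact (Finset.mem_filter.1 ha).2
      (Set.mem_union_left _ (Finset.mem_coe.2 (Finset.mem_filter.1 haC).1))
  calc (∑' w, N.avoid S (n + 1) v w) + ∑ x ∈ C', N.ent C D v (n + 1) x
      = ∑ y ∈ u, ∑' z, N.avoid S n v z * N.p z y := by
        rw [hT1, hu, Finset.sum_union hdisj]
        congr 1
    _ = ∑ y ∈ u, ∑ z ∈ t, N.avoid S n v z * N.p z y := Finset.sum_congr rfl fun y _ => hA y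
    _ = ∑ z ∈ t, N.avoid S n v z * ∑ y ∈ u, N.p z y := by
        rw [Finset.sum_comm]
        exact Finset.sum_congr rfl fun z _ => (Finset.mul_sum _ _ _).symm
    _ ≤ ∑ z ∈ t, N.avoid S n v z * 1 :=
        Finset.sum_le_sum fun z _ =>
          mul_le_mul_of_nonneg_left (N.sum_p_le_one z u) (N.avoid_nonneg _ _ _ _)
    _ = ∑ z ∈ t, N.avoid S n v z := by simp
    _ = ∑' w, N.avoid S n v w := (N.tsum_avoid_eq_sum S n v (Finset.Subset.refl _)).symm

lemma ent_partial_sum_le_one (C : Finset V) (D : Set V) (v : V) (n : ℕ) :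
    ∑ k ∈ Finset.range (n + 1), ∑ x ∈ C.filter (fun x => x ∉ D), N.ent C D v k x ≤ 1 := by
  classical
  by_cases hv : v ∈ (↑C ∪ D : Set V)
  · rw [Finset.sum_range_succ']
    have h2 : ∑ k ∈ Finset.range n, ∑ x ∈ C.filter (fun x => x ∉ D), N.ent C D v (k + 1) x
        = 0 := by
      refine Finset.sum_eq_zero fun k _ => Finset.sum_eq_zero fun x _ => ?_
      exact N.ent_succ_eq_zero C D hv k x
    rw [h2, zero_add]
    by_cases hP : v ∈ C ∧ v ∉ D
    · have h3 : ∀ x ∈ C.filter (fun x => x ∉ D), N.ent C D v 0 x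
          = if x = v then (1:ℝ) else 0 := by
        intro x _
        rw [ent_zero_def]
        by_cases hxv : x = v
        · subst hxv; simp [hP.1, hP.2]
        · rw [if_neg fun h => hxv h.1.symm, if_neg hxv]
      rw [Finset.sum_congr rfl h3, Finset.sum_ite_eq' _ v (fun _ => (1:ℝ))]
      split <;> norm_num
    · have h3 : ∀ x ∈ C.filter (fun x => x ∉ D), N.ent C D v 0 x = 0 := by
        intro x _
        rw [ent_zero_def, if_neg (fun h => hP ⟨h.2.1, h.2.2⟩)]
      rw [Finset.sum_congr rfl h3]
      simp
  · have hM0 : ∑ x ∈ C.filter (fun x => x ∉ D), N.ent C D v 0 x = 0 := by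
      have hvC : v ∉ C := fun h => hv (Set.mem_union_left _ h)
      exact Finset.sum_eq_zero fun x _ => N.ent_zero_eq_zero_of_not_mem C D hvC x
    have hT0 : (∑' w, N.avoid (↑C ∪ D) 0 v w) = 1 := by
      have h4 : (fun w => N.avoid (↑C ∪ D) 0 v w) = fun w => if w = v then (1:ℝ) else 0 := by
        funext w
        rw [avoid_zero_def]
        by_cases hwv : w = v
        · subst hwv; simp [hv]
        · rw [if_neg fun h => hwv h.1.symm, if_neg hwv]
      rw [h4, tsum_ite_eq]
    have key : ∀ m, ∑ k ∈ Finset.range (m + 1), (∑ x ∈ C.filter (fun x => x ∉ D), N.ent C D v k x)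
        + (∑' w, N.avoid (↑C ∪ D) m v w) ≤ 1 := by
      intro m
      induction m with
      | zero => rw [Finset.sum_range_one, hM0, hT0]; norm_num
      | succ m ih =>
        rw [Finset.sum_range_succ]
        have hd := N.ent_drop C D v m
        linarith
    have h2 := key n
    have h3 : 0 ≤ ∑' w, N.avoid (↑C ∪ D) n v w :=
      tsum_nonneg fun w => N.avoid_nonneg _ _ _ _
    linarith

lemma ent_sum_range_le_one (C : Finset V) (D : Set V) (v : V) {x : V} (hxC : x ∈ C)
    (hxD : x ∉ D) (K : ℕ) : ∑ k ∈ Finset.range K, N.ent C D v k x ≤ 1 := by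
  cases K with
  | zero => simp
  | succ n =>
    calc ∑ k ∈ Finset.range (n + 1), N.ent C D v k x
        ≤ ∑ k ∈ Finset.range (n + 1), ∑ x' ∈ C.filter (fun x => x ∉ D), N.ent C D v k x' := by
          refine Finset.sum_le_sum fun k _ => ?_
          exact Finset.single_le_sum (fun x' _ => N.ent_nonneg C D v k x')
            (Finset.mem_filter.2 ⟨hxC, hxD⟩)
      _ ≤ 1 := N.ent_partial_sum_le_one C D v n

lemma summable_ent (C : Finset V) (D : Set V) (v : V) {x : V} (hxC : x ∈ C) (hxD : x ∉ D) :
    Summable (fun k => N.ent C D v k x) :=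
  summable_of_sum_range_le (fun k => N.ent_nonneg C D v k x)
    (N.ent_sum_range_le_one C D v hxC hxD)

lemma tsum_ent_le_one (C : Finset V) (D : Set V) (v : V) {x : V} (hxC : x ∈ C) (hxD : x ∉ D) :
    ∑' k, N.ent C D v k x ≤ 1 :=
  Real.tsum_le_of_sum_range_le (fun k => N.ent_nonneg C D v k x)
    (N.ent_sum_range_le_one C D v hxC hxD)

end Network

namespace Network

variable {V : Type*} (N : Network V)

/-- First-entrance decomposition: decompose a walk avoiding `D` ending in `y ∈ C` according
to the first time it enters `↑C ∪ D`. -/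
lemma first_entrance (C : Finset V) (D : Set V) {y : V} (hyC : y ∈ C) :
    ∀ (n : ℕ) (v : V), N.avoid D n v y =
      ∑ k ∈ Finset.range (n + 1), ∑ x ∈ C.filter (fun x => x ∉ D),
        N.ent C D v k x * N.avoid D (n - k) x y := by
  classical
  have sub1 : ∀ (n : ℕ) (v : V), v ∈ D →
      N.avoid D n v y = ∑ k ∈ Finset.range (n + 1), ∑ x ∈ C.filter (fun x => x ∉ D),
        N.ent C D v k x * N.avoid D (n - k) x y := by
    intro n v hvD
    rw [N.avoid_mem_left D n v y hvD]
    symm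
    refine Finset.sum_eq_zero fun k _ => Finset.sum_eq_zero fun x _ => ?_
    cases k with
    | zero => rw [ent_zero_def, if_neg (fun h => h.2.2 hvD), zero_mul]
    | succ k => rw [N.ent_succ_eq_zero C D (Set.mem_union_right _ hvD) k x, zero_mul]
  have sub2 : ∀ (n : ℕ) (v : V), v ∈ C → v ∉ D →
      N.avoid D n v y = ∑ k ∈ Finset.range (n + 1), ∑ x ∈ C.filter (fun x => x ∉ D),
        N.ent C D v k x * N.avoid D (n - k) x y := by
    intro n v hvC hvD
    rw [Finset.sum_range_succ']
    have hz : ∑ k ∈ Finset.range n, ∑ x ∈ C.filter (fun x => x ∉ D),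
        N.ent C D v (k + 1) x * N.avoid D (n - (k + 1)) x y = 0 := by
      refine Finset.sum_eq_zero fun k _ => Finset.sum_eq_zero fun x _ => ?_
      rw [N.ent_succ_eq_zero C D (Set.mem_union_left _ (Finset.mem_coe.2 hvC)) k x, zero_mul]
    rw [hz, zero_add]
    have h3 : ∀ x ∈ C.filter (fun x => x ∉ D), N.ent C D v 0 x * N.avoid D (n - 0) x y
        = if x = v then N.avoid D n v y else 0 := by
      intro x _
      rw [ent_zero_def]
      by_cases hxv : x = v
      · subst hxv
        rw [if_pos ⟨rfl, hvC, hvD⟩, one_mul, if_pos rfl, Nat.sub_zero]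
      · rw [if_neg fun h => hxv h.1.symm, zero_mul, if_neg hxv]
    rw [Finset.sum_congr rfl h3, Finset.sum_ite_eq' _ v _,
      if_pos (Finset.mem_filter.2 ⟨hvC, hvD⟩)]
  intro n
  induction n with
  | zero =>
    intro v
    by_cases hvD : v ∈ D
    · exact sub1 0 v hvD
    by_cases hvC : v ∈ C
    · exact sub2 0 v hvC hvD
    have hLHS : N.avoid D 0 v y = 0 := by
      rw [avoid_zero_def, if_neg]
      rintro ⟨rfl, -⟩; exact hvC hyC
    rw [hLHS]
    symm
    refine Finset.sum_eq_zero fun k hk => Finset.sum_eq_zero fun x _ => ?_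
    have hk0 : k = 0 := Nat.lt_one_iff.1 (Finset.mem_range.1 hk)
    subst hk0
    rw [N.ent_zero_eq_zero_of_not_mem C D hvC x, zero_mul]
  | succ n ih =>
    intro v
    by_cases hvD : v ∈ D
    · exact sub1 _ v hvD
    by_cases hvC : v ∈ C
    · exact sub2 _ v hvC hvD
    have hvS : v ∉ (↑C ∪ D : Set V) := fun h =>
      ((Set.mem_union _ _ _).1 h).elim (fun h1 => hvC (Finset.mem_coe.1 h1)) fun h2 => hvD h2
    calc N.avoid D (n + 1) v y
        = ∑ w ∈ N.nbr v, N.p v w * N.avoid D n w y := by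
          rw [N.avoid_fs D n y hvD, N.tsum_p_mul_eq_sum]
      _ = ∑ w ∈ N.nbr v, ∑ k ∈ Finset.range (n + 1), ∑ x ∈ C.filter (fun x => x ∉ D),
            N.p v w * (N.ent C D w k x * N.avoid D (n - k) x y) := by
          refine Finset.sum_congr rfl fun w _ => ?_
          rw [ih w, Finset.mul_sum]
          refine Finset.sum_congr rfl fun k _ => ?_
          rw [Finset.mul_sum]
      _ = ∑ k ∈ Finset.range (n + 1), ∑ x ∈ C.filter (fun x => x ∉ D),
            (∑ w ∈ N.nbr v, N.p v w * N.ent C D w k x) * N.avoid D (n - k) x y := by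
          rw [Finset.sum_comm]
          refine Finset.sum_congr rfl fun k _ => ?_
          rw [Finset.sum_comm]
          refine Finset.sum_congr rfl fun x _ => ?_
          rw [Finset.sum_mul]
          exact Finset.sum_congr rfl fun w _ => by ring
      _ = ∑ k ∈ Finset.range (n + 1), ∑ x ∈ C.filter (fun x => x ∉ D),
            N.ent C D v (k + 1) x * N.avoid D (n - k) x y := by
          refine Finset.sum_congr rfl fun k _ => Finset.sum_congr rfl fun x hx => ?_
          have hx' := Finset.mem_filter.1 hx
          rw [N.ent_fs C D hvS k hx'.1 hx'.2, N.tsum_p_mul_eq_sum]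
      _ = ∑ k ∈ Finset.range (n + 1 + 1), ∑ x ∈ C.filter (fun x => x ∉ D),
            N.ent C D v k x * N.avoid D (n + 1 - k) x y := by
          conv_rhs => rw [Finset.sum_range_succ']
          have h0 : ∑ x ∈ C.filter (fun x => x ∉ D),
              N.ent C D v 0 x * N.avoid D (n + 1 - 0) x y = 0 :=
            Finset.sum_eq_zero fun x _ => by
              rw [N.ent_zero_eq_zero_of_not_mem C D hvC x, zero_mul]
          rw [h0, add_zero]
          refine Finset.sum_congr rfl fun k _ => Finset.sum_congr rfl fun x _ => ?_
          have he : n + 1 - (k + 1) = n - k := by omega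
          rw [he]

end Network

/-- Partial sums of a Cauchy-product are bounded by the product of partial sums. -/
lemma triangle_le (f g : ℕ → ℝ) (hf : ∀ n, 0 ≤ f n) (hg : ∀ n, 0 ≤ g n) (N : ℕ) :
    ∑ n ∈ Finset.range N, ∑ k ∈ Finset.range (n + 1), f k * g (n - k)
      ≤ (∑ k ∈ Finset.range N, f k) * ∑ j ∈ Finset.range N, g j := by
  classical
  have h1 : ∑ x ∈ (Finset.range N).sigma (fun n => Finset.range (n + 1)),
        f x.snd * g (x.fst - x.snd)
      = ∑ p ∈ (Finset.range N ×ˢ Finset.range N).filter (fun p => p.1 + p.2 < N),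
          f p.1 * g p.2 := by
    refine Finset.sum_nbij' (fun x => (x.snd, x.fst - x.snd)) (fun p => ⟨p.1 + p.2, p.1⟩)
      ?_ ?_ ?_ ?_ ?_
    · rintro ⟨n, k⟩ hx
      simp only [Finset.mem_sigma, Finset.mem_range] at hx
      simp only [Finset.mem_filter, Finset.mem_product, Finset.mem_range]
      omega
    · rintro ⟨i, j⟩ hp
      simp only [Finset.mem_filter, Finset.mem_product, Finset.mem_range] at hp
      simp only [Finset.mem_sigma, Finset.mem_range]
      omega
    · rintro ⟨n, k⟩ hx
      simp only [Finset.mem_sigma, Finset.mem_range] at hx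
      show (⟨k + (n - k), k⟩ : (_ : ℕ) × ℕ) = ⟨n, k⟩
      have h : k + (n - k) = n := by omega
      rw [h]
    · rintro ⟨i, j⟩ hp
      simp only [Finset.mem_filter, Finset.mem_product, Finset.mem_range] at hp
      show (i, i + j - i) = (i, j)
      have h : i + j - i = j := by omega
      rw [h]
    · rintro ⟨n, k⟩ _
      rfl
  calc ∑ n ∈ Finset.range N, ∑ k ∈ Finset.range (n + 1), f k * g (n - k)
      = ∑ x ∈ (Finset.range N).sigma (fun n => Finset.range (n + 1)),
          f x.snd * g (x.fst - x.snd) :=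
        Finset.sum_sigma' (Finset.range N) (fun n => Finset.range (n + 1))
          (fun n k => f k * g (n - k))
    _ = ∑ p ∈ (Finset.range N ×ˢ Finset.range N).filter (fun p => p.1 + p.2 < N),
          f p.1 * g p.2 := h1
    _ ≤ ∑ p ∈ Finset.range N ×ˢ Finset.range N, f p.1 * g p.2 :=
        Finset.sum_le_sum_of_subset_of_nonneg (Finset.filter_subset _ _)
          (fun p _ _ => mul_nonneg (hf p.1) (hg p.2))
    _ = ∑ i ∈ Finset.range N, ∑ j ∈ Finset.range N, f i * g j :=
        Finset.sum_product' (Finset.range N) (Finset.range N) (fun i j => f i * g j)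
    _ = (∑ k ∈ Finset.range N, f k) * ∑ j ∈ Finset.range N, g j :=
        (Finset.sum_mul_sum _ _ _ _).symm

/-- Renewal bound: if `a` satisfies a renewal recursion with kernel of total mass at most
`1 − η`, then `a` is summable. -/
lemma renewal_summable {a ρ : ℕ → ℝ} (ha0 : a 0 ≤ 1) (han : ∀ n, 0 ≤ a n)
    (hρ : ∀ n, 0 ≤ ρ n)
    (hrec : ∀ n, a (n + 1) = ∑ k ∈ Finset.range (n + 1), ρ (k + 1) * a (n - k))
    {η : ℝ} (hη : 0 < η) (hb : ∀ K, ∑ k ∈ Finset.range K, ρ k ≤ 1 - η) : Summable a := by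
  set η' := min η 1 with hη'def
  have hη'0 : 0 < η' := lt_min hη one_pos
  have hη'1 : η' ≤ 1 := min_le_right _ _
  have hb' : ∀ K, ∑ k ∈ Finset.range K, ρ k ≤ 1 - η' := fun K =>
    le_trans (hb K) (by have := min_le_left η 1; simp only [hη'def]; linarith)
  have key : ∀ N, ∑ n ∈ Finset.range N, a n ≤ 1 / η' := by
    intro N
    cases N with
    | zero => simp; positivity
    | succ N =>
      have hmono : ∑ n ∈ Finset.range N, a n ≤ ∑ n ∈ Finset.range (N + 1), a n := by
        rw [Finset.sum_range_succ]; linarith [han N]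
      have hA1 : ∑ n ∈ Finset.range (N + 1), a n
          = a 0 + ∑ n ∈ Finset.range N, a (n + 1) := by
        rw [Finset.sum_range_succ']; ring
      have hA2 : ∑ n ∈ Finset.range N, a (n + 1)
          ≤ (∑ k ∈ Finset.range N, ρ (k + 1)) * ∑ j ∈ Finset.range N, a j := by
        calc ∑ n ∈ Finset.range N, a (n + 1)
            = ∑ n ∈ Finset.range N, ∑ k ∈ Finset.range (n + 1), ρ (k + 1) * a (n - k) :=
              Finset.sum_congr rfl fun n _ => hrec n
          _ ≤ _ := triangle_le (fun k => ρ (k + 1)) a (fun k => hρ (k + 1)) han N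
      have hρN : ∑ k ∈ Finset.range N, ρ (k + 1) ≤ 1 - η' := by
        have := hb' (N + 1)
        rw [Finset.sum_range_succ'] at this
        linarith [hρ 0]
      have hAnn : (0:ℝ) ≤ ∑ j ∈ Finset.range N, a j :=
        Finset.sum_nonneg fun j _ => han j
      have h5 : ∑ n ∈ Finset.range (N + 1), a n
          ≤ 1 + (1 - η') * ∑ n ∈ Finset.range (N + 1), a n := by
        have h6 : (∑ k ∈ Finset.range N, ρ (k + 1)) * ∑ j ∈ Finset.range N, a j
            ≤ (1 - η') * ∑ j ∈ Finset.range N, a j :=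
          mul_le_mul_of_nonneg_right hρN hAnn
        have h7 : (1 - η') * ∑ j ∈ Finset.range N, a j
            ≤ (1 - η') * ∑ j ∈ Finset.range (N + 1), a j :=
          mul_le_mul_of_nonneg_left hmono (by linarith)
        calc ∑ n ∈ Finset.range (N + 1), a n = a 0 + ∑ n ∈ Finset.range N, a (n + 1) := hA1
          _ ≤ 1 + (1 - η') * ∑ j ∈ Finset.range (N + 1), a j := by linarith
      have : η' * ∑ n ∈ Finset.range (N + 1), a n ≤ 1 := by nlinarith
      rw [le_div_iff₀ hη'0]
      linarith [mul_comm η' (∑ n ∈ Finset.range (N + 1), a n)]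
  exact summable_of_sum_range_le han key

namespace Network

variable {V : Type*} (N : Network V)

lemma summable_p_mul (x : V) (f : V → ℝ) : Summable (fun z => N.p x z * f z) :=
  summable_of_ne_finset_zero (s := N.nbr x) fun z hz => by
    rw [N.p_eq_zero_of_not_mem_nbr hz, zero_mul]

lemma sum_nbr_p (x : V) : ∑ z ∈ N.nbr x, N.p x z = 1 := by
  rw [← N.tsum_p x]
  exact (tsum_eq_sum fun z hz => N.p_eq_zero_of_not_mem_nbr hz).symm

lemma exists_pos_hit (o y : V) (hyo : y ≠ o) :
    ∃ m, 0 < ∑' z, N.p y z * N.ent ({y, o} : Finset V) ∅ z m o := by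
  classical
  have hoC : o ∈ ({y, o} : Finset V) := by simp
  have hent_o : N.ent ({y, o} : Finset V) ∅ o 0 o = 1 := by
    rw [ent_zero_def, if_pos ⟨rfl, hoC, Set.notMem_empty o⟩]
  have main : ∀ u, Relation.ReflTransGen (fun a b => 0 < N.c a b) u o →
      (u = o ∨ (∃ z m, 0 < N.c u z ∧ 0 < N.ent ({y, o} : Finset V) ∅ z m o) ∨
        (∃ z m, 0 < N.c y z ∧ 0 < N.ent ({y, o} : Finset V) ∅ z m o)) := by
    intro u h
    refine Relation.ReflTransGen.head_induction_on
      (motive := fun a _ => (a = o ∨ (∃ z m, 0 < N.c a z ∧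
          0 < N.ent ({y, o} : Finset V) ∅ z m o) ∨
        (∃ z m, 0 < N.c y z ∧ 0 < N.ent ({y, o} : Finset V) ∅ z m o))) h (Or.inl rfl) ?_
    intro a w h' hrest ih
    rcases ih with hwo | ⟨z, m, hcz, hez⟩ | hgoal
    · exact Or.inr (Or.inl ⟨o, 0, hwo ▸ h', by rw [hent_o]; norm_num⟩)
    · by_cases hw : w = y
      · exact Or.inr (Or.inr ⟨z, m, hw ▸ hcz, hez⟩)
      · by_cases hw2 : w = o
        · exact Or.inr (Or.inl ⟨o, 0, hw2 ▸ h', by rw [hent_o]; norm_num⟩)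
        · have hwS : w ∉ ((↑({y, o} : Finset V) ∪ (∅ : Set V)) : Set V) := by
            simp [hw, hw2]
          have hfs := N.ent_fs ({y, o} : Finset V) ∅ hwS m hoC (Set.notMem_empty o)
          have hpos : 0 < N.ent ({y, o} : Finset V) ∅ w (m + 1) o := by
            rw [hfs]
            have hterm : 0 < N.p w z * N.ent ({y, o} : Finset V) ∅ z m o :=
              mul_pos (N.p_pos hcz) hez
            refine lt_of_lt_of_le hterm ?_
            refine Summable.le_tsum (N.summable_p_mul w
              (fun z' => N.ent ({y, o} : Finset V) ∅ z' m o)) z fun j _ =>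
              mul_nonneg (N.p_nonneg w j) (N.ent_nonneg _ _ _ _ _)
          exact Or.inr (Or.inl ⟨w, m + 1, h', hpos⟩)
    · exact Or.inr (Or.inr hgoal)
  have hy := main y (N.conn y o)
  have hfin : ∃ z m, 0 < N.c y z ∧ 0 < N.ent ({y, o} : Finset V) ∅ z m o := by
    rcases hy with rfl | ⟨z, m, hcz, hez⟩ | hgoal
    · exact absurd rfl hyo
    · exact ⟨z, m, hcz, hez⟩
    · exact hgoal
  obtain ⟨z, m, hcz, hez⟩ := hfin
  refine ⟨m, ?_⟩
  have hterm : 0 < N.p y z * N.ent ({y, o} : Finset V) ∅ z m o := mul_pos (N.p_pos hcz) hez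
  refine lt_of_lt_of_le hterm ?_
  refine Summable.le_tsum (N.summable_p_mul y
    (fun z' => N.ent ({y, o} : Finset V) ∅ z' m o)) z fun j _ =>
    mul_nonneg (N.p_nonneg y j) (N.ent_nonneg _ _ _ _ _)

lemma summable_avoid_diag (o y : V) (hyo : y ≠ o) :
    Summable (fun n => N.avoid ({o} : Set V) n y y) := by
  classical
  have hyD : y ∉ ({o} : Set V) := by simp [hyo]
  have hfilter : ({y} : Finset V).filter (fun x => x ∉ ({o} : Set V)) = {y} := by
    rw [Finset.filter_singleton, if_pos hyD]
  let ρ : ℕ → ℝ := fun k =>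
    Nat.casesOn k 0 fun k => ∑' z, N.p y z * N.ent ({y} : Finset V) ({o} : Set V) z k y
  have hρ0 : ρ 0 = 0 := rfl
  have hρs : ∀ k, ρ (k + 1)
      = ∑' z, N.p y z * N.ent ({y} : Finset V) ({o} : Set V) z k y := fun k => rfl
  have hρnn : ∀ k, 0 ≤ ρ k := by
    intro k
    cases k with
    | zero => rw [hρ0]
    | succ k =>
      rw [hρs]
      exact tsum_nonneg fun z => mul_nonneg (N.p_nonneg y z) (N.ent_nonneg _ _ _ _ _)
  have hrec : ∀ n, N.avoid ({o} : Set V) (n + 1) y y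
      = ∑ k ∈ Finset.range (n + 1), ρ (k + 1) * N.avoid ({o} : Set V) (n - k) y y := by
    intro n
    have h2 : ∀ z, N.avoid ({o} : Set V) n z y
        = ∑ k ∈ Finset.range (n + 1),
            N.ent ({y} : Finset V) ({o} : Set V) z k y * N.avoid ({o} : Set V) (n - k) y y := by
      intro z
      rw [N.first_entrance ({y} : Finset V) ({o} : Set V) (Finset.mem_singleton_self y) n z]
      exact Finset.sum_congr rfl fun k _ => by rw [Finset.sum_filter, Finset.sum_singleton, if_pos hyD]
    calc N.avoid ({o} : Set V) (n + 1) y y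
        = ∑ z ∈ N.nbr y, N.p y z * N.avoid ({o} : Set V) n z y := by
          rw [N.avoid_fs _ n y hyD, N.tsum_p_mul_eq_sum]
      _ = ∑ z ∈ N.nbr y, ∑ k ∈ Finset.range (n + 1),
            N.p y z * (N.ent ({y} : Finset V) ({o} : Set V) z k y
              * N.avoid ({o} : Set V) (n - k) y y) := by
          refine Finset.sum_congr rfl fun z _ => ?_
          rw [h2 z, Finset.mul_sum]
      _ = ∑ k ∈ Finset.range (n + 1), ∑ z ∈ N.nbr y,
            N.p y z * (N.ent ({y} : Finset V) ({o} : Set V) z k y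
              * N.avoid ({o} : Set V) (n - k) y y) := Finset.sum_comm
      _ = ∑ k ∈ Finset.range (n + 1), ρ (k + 1) * N.avoid ({o} : Set V) (n - k) y y := by
          refine Finset.sum_congr rfl fun k _ => ?_
          rw [hρs k, N.tsum_p_mul_eq_sum, Finset.sum_mul]
          exact Finset.sum_congr rfl fun z _ => by ring
  obtain ⟨m, hm⟩ := N.exists_pos_hit o y hyo
  have hsets : ((↑({y} : Finset V) ∪ ({o} : Set V)) : Set V)
      = ((↑({y, o} : Finset V) ∪ (∅ : Set V)) : Set V) := by
    ext w
    simp [or_comm]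
  have hentrel : ∀ z k, N.ent ({y} : Finset V) ({o} : Set V) z k y
      = N.ent ({y, o} : Finset V) (∅ : Set V) z k y := by
    intro z k
    cases k with
    | zero =>
      rw [ent_zero_def, ent_zero_def]
      by_cases hzy : z = y
      · rw [if_pos ⟨hzy, by simp [hzy], by simp [hzy, hyo]⟩,
          if_pos ⟨hzy, by simp [hzy], Set.notMem_empty z⟩]
      · rw [if_neg fun h => hzy h.1, if_neg fun h => hzy h.1]
    | succ k =>
      rw [ent_succ_def, ent_succ_def]
      exact tsum_congr fun w => by rw [N.avoid_congr hsets]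
  have hmass : ∀ z n, ∑ k ∈ Finset.range (n + 1), N.ent ({y, o} : Finset V) ∅ z k y
      ≤ 1 - ∑ k ∈ Finset.range (n + 1), N.ent ({y, o} : Finset V) ∅ z k o := by
    intro z n
    have h4 := N.ent_partial_sum_le_one ({y, o} : Finset V) ∅ z n
    have step : ∑ k ∈ Finset.range (n + 1), N.ent ({y, o} : Finset V) ∅ z k y
        + ∑ k ∈ Finset.range (n + 1), N.ent ({y, o} : Finset V) ∅ z k o ≤ 1 := by
      rw [← Finset.sum_add_distrib]
      refine le_trans (Finset.sum_le_sum fun k _ => ?_) h4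
      have e : N.ent ({y, o} : Finset V) ∅ z k y + N.ent ({y, o} : Finset V) ∅ z k o
          = ∑ x ∈ ({y, o} : Finset V), N.ent ({y, o} : Finset V) ∅ z k x :=
        (Finset.sum_pair hyo).symm
      rw [e]
      refine Finset.sum_le_sum_of_subset_of_nonneg ?_ fun x _ _ => N.ent_nonneg _ _ _ _ _
      intro x hx
      simp only [Finset.filter_congr_decidable, Finset.mem_filter]
      exact ⟨hx, Set.notMem_empty x⟩
    linarith
  set η := ∑' z, N.p y z * N.ent ({y, o} : Finset V) ∅ z m o with hηdef
  have hρ_bound : ∀ K, ∑ k ∈ Finset.range K, ρ k ≤ 1 - η := by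
    have hM : ∀ n, m ≤ n → ∑ k ∈ Finset.range (n + 2), ρ k ≤ 1 - η := by
      intro n hmn
      have e1 : ∑ k ∈ Finset.range (n + 2), ρ k = ∑ k ∈ Finset.range (n + 1), ρ (k + 1) := by
        rw [Finset.sum_range_succ', hρ0, add_zero]
      have e2 : ∀ k, ρ (k + 1)
          = ∑ z ∈ N.nbr y, N.p y z * N.ent ({y, o} : Finset V) ∅ z k y := by
        intro k
        rw [hρs k, tsum_congr fun z => by rw [hentrel z k], N.tsum_p_mul_eq_sum]
      rw [e1, Finset.sum_congr rfl fun k _ => e2 k, Finset.sum_comm]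
      have e3 : ∀ z ∈ N.nbr y, ∑ k ∈ Finset.range (n + 1),
          N.p y z * N.ent ({y, o} : Finset V) ∅ z k y
          ≤ N.p y z * (1 - ∑ k ∈ Finset.range (n + 1), N.ent ({y, o} : Finset V) ∅ z k o) := by
        intro z _
        rw [← Finset.mul_sum]
        exact mul_le_mul_of_nonneg_left (hmass z n) (N.p_nonneg y z)
      have e4 : η = ∑ z ∈ N.nbr y, N.p y z * N.ent ({y, o} : Finset V) ∅ z m o :=
        N.tsum_p_mul_eq_sum _ y
      have e5 : ∀ z ∈ N.nbr y, N.p y z * N.ent ({y, o} : Finset V) ∅ z m o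
          ≤ N.p y z * ∑ k ∈ Finset.range (n + 1), N.ent ({y, o} : Finset V) ∅ z k o := by
        intro z _
        refine mul_le_mul_of_nonneg_left ?_ (N.p_nonneg y z)
        exact Finset.single_le_sum (f := fun k => N.ent ({y, o} : Finset V) ∅ z k o)
          (fun k _ => N.ent_nonneg _ _ _ _ _) (Finset.mem_range.2 (Nat.lt_succ_of_le hmn))
      calc ∑ z ∈ N.nbr y, ∑ k ∈ Finset.range (n + 1),
            N.p y z * N.ent ({y, o} : Finset V) ∅ z k y
          ≤ ∑ z ∈ N.nbr y,
              N.p y z * (1 - ∑ k ∈ Finset.range (n + 1), N.ent ({y, o} : Finset V) ∅ z k o) :=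
            Finset.sum_le_sum e3
        _ = ∑ z ∈ N.nbr y, N.p y z
            - ∑ z ∈ N.nbr y, N.p y z * ∑ k ∈ Finset.range (n + 1),
                N.ent ({y, o} : Finset V) ∅ z k o := by
            rw [← Finset.sum_sub_distrib]
            exact Finset.sum_congr rfl fun z _ => by ring
        _ = 1 - ∑ z ∈ N.nbr y, N.p y z * ∑ k ∈ Finset.range (n + 1),
              N.ent ({y, o} : Finset V) ∅ z k o := by rw [N.sum_nbr_p y]
        _ ≤ 1 - η := by
            rw [e4]
            have := Finset.sum_le_sum e5
            linarith
    intro K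
    calc ∑ k ∈ Finset.range K, ρ k ≤ ∑ k ∈ Finset.range (max K m + 2), ρ k :=
        Finset.sum_le_sum_of_subset_of_nonneg
          (Finset.range_subset_range.2 (by omega)) (fun k _ _ => hρnn k)
      _ ≤ 1 - η := hM (max K m) (le_max_right _ _)
  have ha0 : N.avoid ({o} : Set V) 0 y y ≤ 1 := by
    rw [avoid_zero_def]
    split <;> norm_num
  exact renewal_summable ha0 (fun n => N.avoid_nonneg _ _ _ _) hρnn hrec hm hρ_bound

lemma summable_avoid_o (o v y : V) : Summable (fun n => N.avoid ({o} : Set V) n v y) := by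
  classical
  by_cases hyo : y = o
  · have h0 : (fun n => N.avoid ({o} : Set V) n v y) = fun _ => 0 :=
      funext fun n => N.avoid_mem_right _ _ _ _ (by simp [hyo])
    rw [h0]
    exact summable_zero
  · have hyD : y ∉ ({o} : Set V) := by simp [hyo]
    have hdiag := N.summable_avoid_diag o y hyo
    have hfilter : ({y} : Finset V).filter (fun x => x ∉ ({o} : Set V)) = {y} := by
      rw [Finset.filter_singleton, if_pos hyD]
    have hCa : (0:ℝ) ≤ ∑' n, N.avoid ({o} : Set V) n y y :=
      tsum_nonneg fun n => N.avoid_nonneg _ _ _ _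
    refine summable_of_sum_range_le (fun n => N.avoid_nonneg _ _ _ _)
      (c := ∑' n, N.avoid ({o} : Set V) n y y) fun K => ?_
    have hb : ∀ n, N.avoid ({o} : Set V) n v y
        = ∑ k ∈ Finset.range (n + 1), N.ent ({y} : Finset V) ({o} : Set V) v k y
            * N.avoid ({o} : Set V) (n - k) y y := by
      intro n
      rw [N.first_entrance ({y} : Finset V) ({o} : Set V) (Finset.mem_singleton_self y) n v]
      exact Finset.sum_congr rfl fun k _ => by rw [Finset.sum_filter, Finset.sum_singleton, if_pos hyD]
    calc ∑ n ∈ Finset.range K, N.avoid ({o} : Set V) n v y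
        = ∑ n ∈ Finset.range K, ∑ k ∈ Finset.range (n + 1),
            N.ent ({y} : Finset V) ({o} : Set V) v k y * N.avoid ({o} : Set V) (n - k) y y :=
          Finset.sum_congr rfl fun n _ => hb n
      _ ≤ (∑ k ∈ Finset.range K, N.ent ({y} : Finset V) ({o} : Set V) v k y)
            * ∑ j ∈ Finset.range K, N.avoid ({o} : Set V) j y y :=
          triangle_le (fun k => N.ent ({y} : Finset V) ({o} : Set V) v k y)
            (fun j => N.avoid ({o} : Set V) j y y)
            (fun k => N.ent_nonneg _ _ _ _ _) (fun j => N.avoid_nonneg _ _ _ _) K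
      _ ≤ 1 * ∑' n, N.avoid ({o} : Set V) n y y := by
          refine mul_le_mul ?_ ?_ ?_ ?_
          · exact N.ent_sum_range_le_one _ _ v (Finset.mem_singleton_self y) hyD K
          · exact Summable.sum_le_tsum _ (fun j _ => N.avoid_nonneg _ _ _ _) hdiag
          · exact Finset.sum_nonneg fun j _ => N.avoid_nonneg _ _ _ _
          · norm_num
      _ = ∑' n, N.avoid ({o} : Set V) n y y := one_mul _

end Network

namespace Network

variable {V : Type*} (N : Network V)

lemma GreenK_nonneg (o x y : V) : 0 ≤ N.GreenK o x y :=
  tsum_nonneg fun n => N.avoid_nonneg _ _ _ _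

lemma GreenK_o_left (o y : V) : N.GreenK o o y = 0 := by
  rw [Network.GreenK]
  have h : ∀ n, N.avoid ({o} : Set V) n o y = 0 := fun n =>
    N.avoid_mem_left _ _ _ _ rfl
  rw [tsum_congr h, tsum_zero]

lemma g_o_left (o y : V) : N.g o o y = 0 := by
  rw [Network.g, GreenK_o_left, zero_div]

lemma g_nonneg (o x y : V) : 0 ≤ N.g o x y :=
  div_nonneg (N.GreenK_nonneg o x y) (N.cTot_pos y).le

/-- First-step decomposition of the killed Green kernel. -/
lemma GreenK_fs (o : V) {x : V} (hx : x ≠ o) (y : V) :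
    N.GreenK o x y = (if x = y then 1 else 0) + ∑ z ∈ N.nbr x, N.p x z * N.GreenK o z y := by
  have hxo : x ∉ ({o} : Set V) := by simp [hx]
  rw [Network.GreenK, Summable.tsum_eq_zero_add (N.summable_avoid_o o x y)]
  congr 1
  · rw [avoid_zero_def]; simp [hxo]
  · have h1 : ∀ n, N.avoid ({o} : Set V) (n + 1) x y
        = ∑ z ∈ N.nbr x, N.p x z * N.avoid ({o} : Set V) n z y := fun n => by
      rw [N.avoid_fs _ n y hxo, N.tsum_p_mul_eq_sum]
    rw [tsum_congr h1, Summable.tsum_finsetSum fun z _ => ((N.summable_avoid_o o z y).mul_left (N.p x z))]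
    refine Finset.sum_congr rfl fun z _ => ?_
    rw [Network.GreenK, ← tsum_mul_left]

lemma filter_erase (A : Finset V) (o : V) :
    A.filter (fun x => x ∉ ({o} : Set V)) = A.erase o := by
  ext a
  simp only [Finset.mem_filter, Finset.mem_erase, Set.mem_singleton_iff]
  tauto

/-- The harmonic measure is the total entry probability. -/
lemma harm_eq_tsum_ent (A : Finset V) (o : V) (hoA : o ∈ A) {v : V} (hv : v ∉ (↑A : Set V))
    {x : V} (hxA : x ∈ A) (hxo : x ≠ o) :
    N.harm ↑A v x = ∑' k, N.ent A ({o} : Set V) v k x := by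
  have hAset : ((↑A ∪ ({o} : Set V)) : Set V) = (↑A : Set V) := by
    apply Set.union_eq_self_of_subset_right
    simp [hoA]
  have hxD : x ∉ ({o} : Set V) := by simp [hxo]
  have hent0 : N.ent A ({o} : Set V) v 0 x = 0 :=
    N.ent_zero_eq_zero_of_not_mem _ _ (fun h => hv (Finset.mem_coe.2 h)) x
  have hents : ∀ k, N.ent A ({o} : Set V) v (k + 1) x
      = ∑' w, N.avoid (↑A : Set V) k v w * N.p w x := fun k => by
    rw [ent_succ_def]
    exact tsum_congr fun w => by rw [N.avoid_congr hAset]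
  rw [Summable.tsum_eq_zero_add (N.summable_ent A ({o} : Set V) v hxA hxD), hent0, zero_add,
    tsum_congr hents]
  rw [Network.harm, if_neg hv, if_pos (Finset.mem_coe.2 hxA)]

/-- First-entrance decomposition of the killed Green kernel on a set `A ∋ o`. -/
lemma GreenK_first_entrance (A : Finset V) (o : V) (hoA : o ∈ A) {v : V}
    (hv : v ∉ (↑A : Set V)) {y : V} (hyA : y ∈ A) (hyo : y ≠ o) :
    N.GreenK o v y = ∑ x ∈ A.erase o, N.harm ↑A v x * N.GreenK o x y := by
  classical
  have hfe : ∀ n, N.avoid ({o} : Set V) n v y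
      = ∑ x ∈ A.erase o, ∑ k ∈ Finset.range (n + 1),
          N.ent A ({o} : Set V) v k x * N.avoid ({o} : Set V) (n - k) x y := by
    intro n
    rw [N.first_entrance A ({o} : Set V) hyA n v]
    rw [Finset.sum_comm]
    exact Finset.sum_congr (filter_erase A o) fun x _ => rfl
  have hsumx : ∀ x ∈ A.erase o, Summable (fun n => ∑ k ∈ Finset.range (n + 1),
      N.ent A ({o} : Set V) v k x * N.avoid ({o} : Set V) (n - k) x y) := by
    intro x hx
    have hxA := Finset.mem_of_mem_erase hx
    have hxo : x ∉ ({o} : Set V) := by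
      simp [Finset.ne_of_mem_erase hx]
    have hf : Summable (fun k => ‖N.ent A ({o} : Set V) v k x‖) := by
      refine ((N.summable_ent A ({o} : Set V) v hxA hxo).abs).congr fun k => ?_
      rw [Real.norm_eq_abs]
    have hg : Summable (fun n => ‖N.avoid ({o} : Set V) n x y‖) := by
      refine ((N.summable_avoid_o o x y).abs).congr fun n => ?_
      rw [Real.norm_eq_abs]
    exact (summable_norm_sum_mul_range_of_summable_norm hf hg).of_norm
  rw [Network.GreenK, tsum_congr hfe, Summable.tsum_finsetSum hsumx]
  refine Finset.sum_congr rfl fun x hx => ?_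
  have hxA := Finset.mem_of_mem_erase hx
  have hxo : x ∉ ({o} : Set V) := by simp [Finset.ne_of_mem_erase hx]
  have hf : Summable (fun k => ‖N.ent A ({o} : Set V) v k x‖) := by
    refine ((N.summable_ent A ({o} : Set V) v hxA hxo).abs).congr fun k => ?_
    rw [Real.norm_eq_abs]
  have hg : Summable (fun n => ‖N.avoid ({o} : Set V) n x y‖) := by
    refine ((N.summable_avoid_o o x y).abs).congr fun n => ?_
    rw [Real.norm_eq_abs]
  rw [← tsum_mul_tsum_eq_tsum_sum_range_of_summable_norm hf hg,
    N.harm_eq_tsum_ent A o hoA hv hxA (Finset.ne_of_mem_erase hx)]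
  rfl

lemma GreenK_symm (o x y : V) : N.GreenK o x y * N.cTot x = N.GreenK o y x * N.cTot y := by
  rw [Network.GreenK, Network.GreenK, ← tsum_mul_right, ← tsum_mul_right]
  exact tsum_congr fun n => N.avoid_rev _ n x y

lemma g_symm (o x y : V) : N.g o x y = N.g o y x := by
  rw [Network.g, Network.g, div_eq_div_iff (N.cTot_ne_zero y) (N.cTot_ne_zero x)]
  exact N.GreenK_symm o x y

/-- First-step decomposition of the Green density. -/
lemma g_fs (o : V) {x : V} (hx : x ≠ o) (y : V) :
    N.g o x y = (if x = y then 1 else 0) / N.cTot y + ∑ z ∈ N.nbr x, N.p x z * N.g o z y := by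
  rw [Network.g, N.GreenK_fs o hx y, add_div, Finset.sum_div]
  congr 1
  exact Finset.sum_congr rfl fun z _ => by rw [Network.g, mul_div_assoc]

/-- First-entrance decomposition of the Green density. -/
lemma g_first_entrance (A : Finset V) (o : V) (hoA : o ∈ A) {v : V}
    (hv : v ∉ (↑A : Set V)) {y : V} (hyA : y ∈ A) (hyo : y ≠ o) :
    N.g o v y = ∑ x ∈ A.erase o, N.harm ↑A v x * N.g o x y := by
  rw [Network.g, N.GreenK_first_entrance A o hoA hv hyA hyo, Finset.sum_div]
  exact Finset.sum_congr rfl fun x _ => by rw [Network.g, mul_div_assoc]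

end Network

namespace Network

variable {V : Type*} (N : Network V)

lemma green_matrix_det_ne_zero (o : V) (A : Finset V) (hoA : o ∈ A) :
    (Matrix.of fun x y : ↥(A.erase o) => N.g o ↑x ↑y).det ≠ 0 := by
  classical
  intro hdet
  obtain ⟨a, ha0, hMa⟩ := Matrix.exists_mulVec_eq_zero_iff.2 hdet
  set f : V → ℝ := fun z => ∑ x : ↥(A.erase o), N.g o z ↑x * a x with hf
  have hfB : ∀ x : ↥(A.erase o), f ↑x = 0 := by
    intro x
    have h := congrFun hMa x
    simp only [Matrix.mulVec, dotProduct, Matrix.of_apply, Pi.zero_apply] at h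
    exact h
  have hfo : f o = 0 := by
    rw [hf]
    exact Finset.sum_eq_zero fun x _ => by rw [N.g_o_left, zero_mul]
  have hfW : ∀ w ∈ A.erase o, f w = 0 := fun w hw => hfB ⟨w, hw⟩
  have hfout : ∀ z, z ∉ (↑A : Set V) → f z = 0 := by
    intro z hz
    rw [hf]
    calc ∑ x : ↥(A.erase o), N.g o z ↑x * a x
        = ∑ x : ↥(A.erase o), ∑ w ∈ A.erase o, N.harm ↑A z w * N.g o w ↑x * a x := by
          refine Finset.sum_congr rfl fun x _ => ?_
          rw [N.g_first_entrance A o hoA hz (Finset.mem_of_mem_erase x.2)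
            (Finset.ne_of_mem_erase x.2), Finset.sum_mul]
      _ = ∑ w ∈ A.erase o, ∑ x : ↥(A.erase o), N.harm ↑A z w * N.g o w ↑x * a x :=
          Finset.sum_comm
      _ = ∑ w ∈ A.erase o, N.harm ↑A z w * f w := by
          refine Finset.sum_congr rfl fun w _ => ?_
          rw [hf, Finset.mul_sum]
          exact Finset.sum_congr rfl fun x _ => by ring
      _ = 0 := Finset.sum_eq_zero fun w hw => by rw [hfW w hw, mul_zero]
  have hfall : ∀ z, f z = 0 := by
    intro z
    by_cases hzA : z ∈ A
    · by_cases hzo : z = o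
      · rw [hzo]; exact hfo
      · exact hfW z (Finset.mem_erase.2 ⟨hzo, hzA⟩)
    · exact hfout z fun h => hzA (Finset.mem_coe.1 h)
  have key : ∀ x : ↥(A.erase o), a x = 0 := by
    intro x
    have hxo : (↑x : V) ≠ o := Finset.ne_of_mem_erase x.2
    have h0 : (0:ℝ) = a x / N.cTot ↑x := by
      calc (0:ℝ) = f ↑x := (hfB x).symm
        _ = ∑ y : ↥(A.erase o), ((if (↑x : V) = ↑y then (1:ℝ) else 0) / N.cTot ↑y
              + ∑ z ∈ N.nbr ↑x, N.p ↑x z * N.g o z ↑y) * a y := by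
            rw [hf]
            exact Finset.sum_congr rfl fun y _ => by rw [N.g_fs o hxo ↑y]
        _ = (∑ y : ↥(A.erase o), (if (↑x : V) = ↑y then (1:ℝ) else 0) / N.cTot ↑y * a y)
              + ∑ y : ↥(A.erase o), (∑ z ∈ N.nbr ↑x, N.p ↑x z * N.g o z ↑y) * a y := by
            rw [← Finset.sum_add_distrib]
            exact Finset.sum_congr rfl fun y _ => by ring
        _ = a x / N.cTot ↑x + ∑ z ∈ N.nbr ↑x, N.p ↑x z * f z := by
            congr 1
            · have h1 : ∀ y : ↥(A.erase o),
                  (if (↑x : V) = ↑y then (1:ℝ) else 0) / N.cTot ↑y * a y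
                  = if x = y then a y / N.cTot ↑y else 0 := by
                intro y
                by_cases hxy : x = y
                · rw [if_pos (by rw [hxy]), if_pos hxy]; ring
                · rw [if_neg (fun h => hxy (Subtype.ext h)), if_neg hxy, zero_div, zero_mul]
              rw [Finset.sum_congr rfl fun y _ => h1 y]
              exact Fintype.sum_ite_eq x fun y => a y / N.cTot ↑y
            · calc ∑ y : ↥(A.erase o), (∑ z ∈ N.nbr ↑x, N.p ↑x z * N.g o z ↑y) * a y
                  = ∑ y : ↥(A.erase o), ∑ z ∈ N.nbr ↑x, N.p ↑x z * N.g o z ↑y * a y :=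
                    Finset.sum_congr rfl fun y _ => Finset.sum_mul _ _ _
                _ = ∑ z ∈ N.nbr ↑x, ∑ y : ↥(A.erase o), N.p ↑x z * N.g o z ↑y * a y :=
                    Finset.sum_comm
                _ = ∑ z ∈ N.nbr ↑x, N.p ↑x z * f z := by
                    refine Finset.sum_congr rfl fun z _ => ?_
                    rw [hf, Finset.mul_sum]
                    exact Finset.sum_congr rfl fun y _ => by ring
        _ = a x / N.cTot ↑x := by
            rw [Finset.sum_congr rfl fun z _ => by rw [hfall z, mul_zero]]
            rw [Finset.sum_const_zero, add_zero]
    rcases div_eq_zero_iff.1 h0.symm with h | h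
    · exact h
    · exact absurd h (N.cTot_ne_zero ↑x)
  exact ha0 (funext key)

end Network

/-- Determinantal formula for harmonic measure: for a finite `A ∋ o` with
`|A| ≥ 2`, the matrix `M = (g_o(x,y))_{x,y ∈ A∖{o}}` is invertible and
`ω_v^A(y) = det(M^{v,y})/det(M)` for every `v ≠ o`, where `M^{v,y}` is `M` with its
`y`-column replaced by `(g_o(x,v))_{x ∈ A∖{o}}`. -/
theorem harmonic_measure_determinantal {V : Type*} (N : Network V) (hrec : N.Recurrent)
    (o : V) (A : Finset V) (hoA : o ∈ A) (hcard : 2 ≤ A.card) :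
    (Matrix.of fun x y : ↥(A.erase o) => N.g o ↑x ↑y).det ≠ 0 ∧
    ∀ v : V, v ≠ o → ∀ y : ↥(A.erase o),
      N.harm ↑A v ↑y =
        ((Matrix.of fun x y : ↥(A.erase o) => N.g o ↑x ↑y).updateCol y
            (fun x => N.g o ↑x v)).det /
          (Matrix.of fun x y : ↥(A.erase o) => N.g o ↑x ↑y).det := by
  classical
  set M : Matrix ↥(A.erase o) ↥(A.erase o) ℝ :=
    Matrix.of fun x y : ↥(A.erase o) => N.g o ↑x ↑y with hM
  have hdet : M.det ≠ 0 := N.green_matrix_det_ne_zero o A hoA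
  refine ⟨hdet, ?_⟩
  intro v hvo y
  by_cases hvA : v ∈ A
  · -- `v` lies in `A \ {o}`: the harmonic measure is a point mass at `v`.
    have hvB : v ∈ A.erase o := Finset.mem_erase.2 ⟨hvo, hvA⟩
    set v' : ↥(A.erase o) := ⟨v, hvB⟩ with hv'
    have hharm : N.harm ↑A v ↑y = if v = ↑y then 1 else 0 := by
      rw [Network.harm, if_pos (Finset.mem_coe.2 hvA)]
    have hcol : (fun x : ↥(A.erase o) => N.g o ↑x v) = fun x => M x v' := rfl
    by_cases hyv : y = v'
    · subst hyv
      have h1 : (M.updateCol v' fun x => M x v') = M := Matrix.updateCol_eq_self M v'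
      rw [hharm, if_pos rfl, hcol, h1, div_self hdet]
    · have h2 : (M.updateCol y fun x => M x v').det = 0 :=
        Matrix.det_updateCol_eq_zero fun h => hyv (h.symm)
      rw [hharm, if_neg (fun h => hyv (Subtype.ext h.symm)), hcol, h2, zero_div]
  · -- `v` outside `A`: use the first-entrance identity and Cramer's rule.
    have hv : v ∉ (↑A : Set V) := fun h => hvA (Finset.mem_coe.1 h)
    set ω : ↥(A.erase o) → ℝ := fun x => N.harm ↑A v ↑x with hω
    set b : ↥(A.erase o) → ℝ := fun x => N.g o v ↑x with hb
    have hlin : M.transpose.mulVec ω = b := by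
      funext y'
      simp only [Matrix.mulVec, dotProduct, Matrix.transpose_apply, Matrix.of_apply, hM,
        hω, hb]
      rw [N.g_first_entrance A o hoA hv (Finset.mem_of_mem_erase y'.2)
        (Finset.ne_of_mem_erase y'.2),
        ← Finset.sum_coe_sort (A.erase o) (fun w => N.harm ↑A v w * N.g o w ↑y')]
      exact Finset.sum_congr rfl fun x _ => by ring
    have hunit : IsUnit M.transpose.det := by
      rw [Matrix.det_transpose]; exact isUnit_iff_ne_zero.2 hdet
    have hcram : Matrix.cramer M.transpose b = M.det • ω := by
      have h3 : M.transpose.mulVec (Matrix.cramer M.transpose b)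
          = M.transpose.mulVec (M.det • ω) := by
        rw [Matrix.mulVec_cramer, Matrix.mulVec_smul, hlin, Matrix.det_transpose]
      have h4 := congrArg (fun u => (M.transpose)⁻¹.mulVec u) h3
      simp only [Matrix.mulVec_mulVec, Matrix.nonsing_inv_mul _ hunit,
        Matrix.one_mulVec] at h4
      exact h4
    have h5 : M.det * ω y = (M.transpose.updateCol y b).det := by
      have h6 := congrFun hcram y
      rw [Matrix.cramer_apply] at h6
      rw [h6]
      rfl
    have hMsymm : M.transpose = M := by
      ext i j
      exact N.g_symm o ↑j ↑i
    have hbc : (fun x : ↥(A.erase o) => N.g o ↑x v) = b := by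
      funext x
      rw [hb]
      exact N.g_symm o ↑x v
    have h7 : (M.transpose.updateCol y b).det
        = (M.updateCol y fun x : ↥(A.erase o) => N.g o ↑x v).det := by
      rw [Matrix.updateCol_transpose, Matrix.det_transpose, hbc]
      conv_rhs => rw [← Matrix.det_transpose (M.updateCol y b)]
      rw [← Matrix.updateRow_transpose, hMsymm]
    show ω y = _
    rw [eq_div_iff hdet, mul_comm, h5, h7]
end

section
/- Reduction lemma: if for every M>0 there exist an integer R>0 and a potential ψ with ψ(v)≥M for all v at graph distance exactly R from o, then there exists a single potential h tending to infinity (given by h = Σ_n 2^{−n} ψ_n for a suitable choice of potentials ψ_n). -/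
open scoped Classical
open Filter Topology MeasureTheory ProbabilityTheory

/-!
If a potential `ψ` is at least `M > 0` on the sphere `d(o, ·) = R`, the function equal to `M`
inside the sphere and to `min ψ M` outside it is nonnegative and superharmonic, hence harmonic by
recurrence; as it is at most `M` and equals `M` at `o`, it is constant, so `ψ ≥ M` outside the
ball of radius `R`. Along a path from `o`, the equation `Δψ ∈ {0, 1}` bounds each potential at a
vertex by a constant independent of the potential, so for potentials `ψ_n ≥ 2 · 4ⁿ` outside
balls `B_n` the series `h = Σ 2^{-n-1} ψ_n` converges to a potential with `h ≥ 2ⁿ` outside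
`B_n`. Balls are finite since the walk has finite range in finitely many steps.
-/

namespace Network

variable {V : Type*} (N : Network V)

lemma finite_support_c (x : V) : (Function.support (N.c x)).Finite :=
  (N.locFin x).subset fun y hy => (N.nonneg x y).lt_of_ne' hy

lemma finite_support_p (x : V) : (Function.support (N.p x)).Finite :=
  (N.finite_support_c x).subset fun y hy hc => hy (by simp [p, hc])

lemma pstep_nonneg (n : ℕ) (x y : V) : 0 ≤ N.pstep n x y := by
  induction n generalizing y with
  | zero => simp only [pstep]; split_ifs <;> norm_num
  | succ n ih => exact tsum_nonneg fun z => mul_nonneg (ih z) (N.p_nonneg z y)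

lemma finite_support_pstep (n : ℕ) (x : V) : (Function.support (N.pstep n x)).Finite := by
  induction n with
  | zero =>
    refine (Set.finite_singleton x).subset fun y hy => ?_
    by_contra hxy
    exact hy (if_neg fun h => hxy h.symm)
  | succ n ih =>
    refine (ih.biUnion fun z _ => N.finite_support_p z).subset fun y hy => ?_
    by_contra hy'
    refine hy ((tsum_congr fun z => ?_).trans tsum_zero)
    by_cases hz : N.pstep n x z = 0
    · simp [hz]
    · have hp : N.p z y = 0 := by_contra fun h => hy' (Set.mem_biUnion hz h)
      simp [hp]

lemma summable_c_mul (v : V) (f : V → ℝ) : Summable fun x => N.c v x * f x :=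
  summable_of_hasFiniteSupport <|
    (N.finite_support_c v).subset (Function.support_mul_subset_left _ _)

lemma summable_pstep_mul (n : ℕ) (x : V) (f : V → ℝ) : Summable fun y => N.pstep n x y * f y :=
  summable_of_hasFiniteSupport <|
    (N.finite_support_pstep n x).subset (Function.support_mul_subset_left _ _)

lemma pstep_succ_pos {n : ℕ} {x y z : V} (hz : 0 < N.pstep n x z) (hc : 0 < N.c z y) :
    0 < N.pstep (n + 1) x y :=
  (mul_pos hz (N.p_pos hc)).trans_le <| (N.summable_pstep_mul n x fun z => N.p z y).le_tsum z
    fun _ _ => mul_nonneg (N.pstep_nonneg _ _ _) (N.p_nonneg _ _)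

lemma lap_eq_tsum_sub (u : V → ℝ) (v : V) :
    N.lap u v = ∑' x, N.c v x * u x - N.cTot v * u v := by
  simp only [lap, mul_sub]
  rw [Summable.tsum_sub (N.summable_c_mul v u) (N.summable_c_mul v fun _ => u v), tsum_mul_right]
  rfl

lemma lap_eq_cTot_mul (u : V → ℝ) (v : V) :
    N.lap u v = N.cTot v * (∑' x, N.p v x * u x - u v) := by
  have hp : ∑' x, N.p v x * u x = (∑' x, N.c v x * u x) / N.cTot v := by
    simp only [p, div_mul_eq_mul_div, tsum_div_const]
  rw [lap_eq_tsum_sub, hp, mul_sub, mul_div_cancel₀ _ (N.cTot_pos v).ne']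

lemma lap_const (a : ℝ) (v : V) : N.lap (fun _ => a) v = 0 := by
  simp [lap]

lemma lap_const_mul (a : ℝ) (f : V → ℝ) (v : V) :
    N.lap (fun x => a * f x) v = a * N.lap f v := by
  simp only [lap, ← tsum_mul_left]
  exact tsum_congr fun x => by ring

lemma lap_le_lap {f g : V → ℝ} {v : V} (hle : ∀ x, 0 < N.c v x → f x ≤ g x) (heq : f v = g v) :
    N.lap f v ≤ N.lap g v := by
  refine Summable.tsum_le_tsum (fun x => ?_) (N.summable_c_mul v _) (N.summable_c_mul v _)
  rcases (N.nonneg v x).eq_or_lt with hc | hc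
  · simp [← hc]
  · rw [heq]
    exact mul_le_mul_of_nonneg_left (sub_le_sub_right (hle x hc) _) hc.le

lemma lap_tsum {φ : ℕ → V → ℝ} (hsum : ∀ x, Summable fun n => φ n x) (v : V) :
    N.lap (fun x => ∑' n, φ n x) v = ∑' n, N.lap (φ n) v := by
  obtain ⟨S, hS0⟩ : ∃ S : Finset V, ∀ x ∉ S, N.c v x = 0 :=
    ⟨(N.finite_support_c v).toFinset, fun x hx => by simpa using hx⟩
  have hS : ∀ f : V → ℝ, N.lap f v = ∑ x ∈ S, N.c v x * (f x - f v) := fun f =>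
    tsum_eq_sum fun x hx => by simp [hS0 x hx]
  calc N.lap (fun x => ∑' n, φ n x) v = ∑ x ∈ S, ∑' n, N.c v x * (φ n x - φ n v) := by
        rw [hS]
        refine Finset.sum_congr rfl fun x _ => ?_
        rw [tsum_mul_left, Summable.tsum_sub (hsum x) (hsum v)]
    _ = ∑' n, ∑ x ∈ S, N.c v x * (φ n x - φ n v) :=
        (Summable.tsum_finsetSum fun x _ => ((hsum x).sub (hsum v)).mul_left _).symm
    _ = ∑' n, N.lap (φ n) v := tsum_congr fun n => (hS _).symm

/-- `N.expect n u x` is `E_x[u(X_n)]` for the network random walk `X`. -/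
noncomputable def expect (n : ℕ) (u : V → ℝ) (x : V) : ℝ := ∑' y, N.pstep n x y * u y

lemma expect_zero (u : V → ℝ) (x : V) : N.expect 0 u x = u x := by
  simp [expect, pstep]

lemma expect_succ (n : ℕ) (u : V → ℝ) (x : V) :
    N.expect (n + 1) u x = N.expect n (fun z => ∑' y, N.p z y * u y) x := by
  have hfin : (Function.support
      (Function.uncurry fun z y => N.pstep n x z * N.p z y * u y)).Finite := by
    refine ((N.finite_support_pstep n x).prod ((N.finite_support_pstep n x).biUnion
      fun z _ => N.finite_support_p z)).subset ?_
    rintro ⟨z, y⟩ h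
    simp only [Function.mem_support, Function.uncurry_apply_pair, ne_eq, mul_eq_zero,
      not_or] at h
    exact ⟨h.1.1, Set.mem_biUnion h.1.1 h.1.2⟩
  calc N.expect (n + 1) u x = ∑' y, ∑' z, N.pstep n x z * N.p z y * u y := by
        simp only [expect, pstep, tsum_mul_right]
    _ = ∑' z, ∑' y, N.pstep n x z * N.p z y * u y :=
        (summable_of_hasFiniteSupport hfin).tsum_comm
    _ = N.expect n (fun z => ∑' y, N.p z y * u y) x := by
        simp only [expect, mul_assoc, tsum_mul_left]

lemma expect_sub (n : ℕ) (f g : V → ℝ) (x : V) :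
    N.expect n (fun z => f z - g z) x = N.expect n f x - N.expect n g x := by
  simp only [expect, mul_sub]
  exact Summable.tsum_sub (N.summable_pstep_mul n x f) (N.summable_pstep_mul n x g)

theorem lap_eq_zero_of_lap_nonpos (hrec : N.Recurrent) {u : V → ℝ} (hu : ∀ v, 0 ≤ u v)
    (hsuper : ∀ v, N.lap u v ≤ 0) (v : V) : N.lap u v = 0 := by
  set s : V → ℝ := fun w => u w - ∑' y, N.p w y * u y
  have hs : ∀ w, 0 ≤ s w := fun w => by
    have := hsuper w
    rw [lap_eq_cTot_mul] at this
    linarith [nonpos_of_mul_nonpos_right this (N.cTot_pos w)]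
  -- `s = u - Pu` telescopes: `Σ_{k<n} P^k s = u - P^n u ≤ u`.
  have hbound : ∀ n, (∑ k ∈ Finset.range n, N.pstep k v v) * s v ≤ u v := fun n => by
    have htele : ∑ k ∈ Finset.range n, N.expect k s v = u v - N.expect n u v := by
      rw [← N.expect_zero u v, ← Finset.sum_range_sub' fun k => N.expect k u v]
      exact Finset.sum_congr rfl fun k _ => by rw [expect_succ, ← expect_sub]
    have hterm : ∀ k, N.pstep k v v * s v ≤ N.expect k s v := fun k =>
      (N.summable_pstep_mul k v s).le_tsum v fun z _ => mul_nonneg (N.pstep_nonneg k v z) (hs z)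
    have hrest : 0 ≤ N.expect n u v :=
      tsum_nonneg fun z => mul_nonneg (N.pstep_nonneg n v z) (hu z)
    rw [Finset.sum_mul]
    linarith [Finset.sum_le_sum fun k (_ : k ∈ Finset.range n) => hterm k]
  have hsv : s v = 0 := by
    refine (hs v).eq_or_lt.elim Eq.symm fun hsv => (hrec v ?_).elim
    exact summable_of_sum_range_le (fun k => N.pstep_nonneg k v v)
      fun n => (le_div_iff₀ hsv).2 (hbound n)
  rw [lap_eq_cTot_mul, show ∑' y, N.p v y * u y - u v = -s v by ring, hsv, neg_zero, mul_zero]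

theorem eq_of_lap_eq_zero_of_le {u : V → ℝ} {M : ℝ} {o : V} (hharm : ∀ v, N.lap u v = 0)
    (hle : ∀ v, u v ≤ M) (ho : u o = M) (v : V) : u v = M := by
  have step : ∀ x y, u x = M → 0 < N.c x y → u y = M := fun x y hx hc => by
    by_contra hne
    have hneg : N.lap u x < ∑' _ : V, (0 : ℝ) := by
      refine Summable.tsum_lt_tsum (i := y) (fun t => ?_) ?_ (N.summable_c_mul x _) summable_zero
      · rw [hx]
        exact mul_nonpos_of_nonneg_of_nonpos (N.nonneg x t) (sub_nonpos.2 (hle t))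
      · rw [hx]
        exact mul_neg_of_pos_of_neg hc (sub_neg.2 ((hle y).lt_of_ne hne))
    rw [tsum_zero, hharm x] at hneg
    exact lt_irrefl 0 hneg
  induction N.conn o v with
  | refl => exact ho
  | tail _ hc ih => exact step _ _ ih hc

noncomputable def graphDist (o v : V) : ℕ := sInf {n : ℕ | 0 < N.pstep n o v}

lemma exists_pstep_pos (o v : V) : ∃ n, 0 < N.pstep n o v := by
  induction N.conn o v with
  | refl => exact ⟨0, by simp [pstep]⟩
  | tail _ hc ih =>
    obtain ⟨n, hn⟩ := ih
    exact ⟨n + 1, N.pstep_succ_pos hn hc⟩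

lemma pstep_graphDist_pos (o v : V) : 0 < N.pstep (N.graphDist o v) o v :=
  Nat.sInf_mem (N.exists_pstep_pos o v)

lemma graphDist_self (o : V) : N.graphDist o o = 0 :=
  Nat.sInf_eq_zero.2 (Or.inl (by simp [pstep]))

lemma graphDist_le_of_c_pos (o : V) {x y : V} (hc : 0 < N.c x y) :
    N.graphDist o y ≤ N.graphDist o x + 1 :=
  Nat.sInf_le (N.pstep_succ_pos (N.pstep_graphDist_pos o x) hc)

lemma finite_setOf_graphDist_le (o : V) (R : ℕ) : {v | N.graphDist o v ≤ R}.Finite :=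
  ((Finset.range (R + 1)).finite_toSet.biUnion fun n _ => N.finite_support_pstep n o).subset
    fun v hv => Set.mem_biUnion (by simpa [Nat.lt_succ_iff] using hv)
      (N.pstep_graphDist_pos o v).ne'

variable {N} in
lemma IsPotential.lap_le_one {o : V} {ψ : V → ℝ} (hψ : N.IsPotential o ψ) (v : V) :
    N.lap ψ v ≤ 1 := by
  by_cases hv : v = o
  · rw [hv, hψ.2.2.1]
  · rw [hψ.2.2.2 v hv]
    exact zero_le_one

theorem exists_forall_isPotential_le (o v : V) :
    ∃ C, ∀ ψ, N.IsPotential o ψ → ψ v ≤ C := by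
  induction N.conn o v with
  | refl => exact ⟨0, fun ψ hψ => hψ.2.1.le⟩
  | @tail x y _ hc ih =>
    obtain ⟨C, hC⟩ := ih
    refine ⟨(1 + N.cTot x * C) / N.c x y, fun ψ hψ => (le_div_iff₀' hc).2 ?_⟩
    calc N.c x y * ψ y ≤ ∑' t, N.c x t * ψ t :=
          (N.summable_c_mul x ψ).le_tsum y fun t _ => mul_nonneg (N.nonneg x t) (hψ.1 t)
      _ = N.lap ψ x + N.cTot x * ψ x := by rw [lap_eq_tsum_sub]; ring
      _ ≤ 1 + N.cTot x * C :=
          add_le_add (hψ.lap_le_one x) (mul_le_mul_of_nonneg_left (hC ψ hψ) (N.cTot_pos x).le)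

lemma summable_mul_isPotential {o : V} {w : ℕ → ℝ} (hw : Summable w) (hw0 : ∀ n, 0 ≤ w n)
    {ψ : ℕ → V → ℝ} (hψ : ∀ n, N.IsPotential o (ψ n)) (v : V) :
    Summable fun n => w n * ψ n v := by
  obtain ⟨C, hC⟩ := N.exists_forall_isPotential_le o v
  exact Summable.of_nonneg_of_le (fun n => mul_nonneg (hw0 n) ((hψ n).1 v))
    (fun n => mul_le_mul_of_nonneg_left (hC _ (hψ n)) (hw0 n)) (hw.mul_right C)

theorem isPotential_tsum {o : V} {w : ℕ → ℝ} (hw : HasSum w 1) (hw0 : ∀ n, 0 ≤ w n)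
    {ψ : ℕ → V → ℝ} (hψ : ∀ n, N.IsPotential o (ψ n)) :
    N.IsPotential o fun v => ∑' n, w n * ψ n v := by
  have hlap : ∀ v, N.lap (fun v => ∑' n, w n * ψ n v) v = ∑' n, w n * N.lap (ψ n) v :=
    fun v => by
      rw [N.lap_tsum (N.summable_mul_isPotential hw.summable hw0 hψ)]
      simp only [lap_const_mul]
  refine ⟨fun v => tsum_nonneg fun n => mul_nonneg (hw0 n) ((hψ n).1 v),
    by simp [(hψ _).2.1], ?_, fun v hv => ?_⟩
  · simp [hlap, (hψ _).2.2.1, hw.tsum_eq]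
  · simp [hlap, (hψ _).2.2.2 v hv]

theorem le_of_le_on_sphere (hrec : N.Recurrent) {o : V} {ψ : V → ℝ} {M : ℝ} {R : ℕ}
    (hψ : N.IsPotential o ψ) (hR : 0 < R) (hsph : ∀ v, N.graphDist o v = R → M ≤ ψ v)
    {v : V} (hv : R ≤ N.graphDist o v) : M ≤ ψ v := by
  rcases le_or_gt M 0 with hM | hM
  · exact hM.trans (hψ.1 v)
  set u : V → ℝ := fun v => if N.graphDist o v < R then M else min (ψ v) M with hu
  have hle : ∀ v, u v ≤ M := fun v => by
    simp only [hu]; split_ifs <;> simp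
  have hnonneg : ∀ v, 0 ≤ u v := fun v => by
    simp only [hu]; split_ifs
    exacts [hM.le, le_min (hψ.1 v) hM.le]
  have hleψ : ∀ v, R ≤ N.graphDist o v → u v ≤ ψ v := fun v hv => by
    simp [hu, hv.not_gt]
  have hsuper : ∀ v, N.lap u v ≤ 0 := fun v => by
    by_cases huv : u v = M
    · exact (N.lap_le_lap (fun x _ => hle x) huv).trans_eq (N.lap_const M v)
    have hfar : R < N.graphDist o v ∧ u v = ψ v := by
      simp only [hu] at huv ⊢
      split_ifs at huv ⊢ with h
      · exact absurd rfl huv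
      have hψv : ψ v < M := lt_of_not_ge fun h' => huv (min_eq_right h')
      exact ⟨lt_of_le_of_ne (not_lt.1 h) fun h' => hψv.not_ge (hsph v h'.symm),
        min_eq_left hψv.le⟩
    have hvo : v ≠ o := by
      rintro rfl
      simp [graphDist_self] at hfar
    refine (N.lap_le_lap (fun x hc => hleψ x ?_) hfar.2).trans_eq (hψ.2.2.2 v hvo)
    have := N.graphDist_le_of_c_pos o ((N.symm v x) ▸ hc)
    omega
  have huo : u o = M := by simp [hu, graphDist_self, hR]
  have hconst := N.eq_of_lap_eq_zero_of_le (N.lap_eq_zero_of_lap_nonpos hrec hnonneg hsuper)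
    hle huo v
  simpa [hu, hv.not_gt] using hconst

end Network

/-- Reduction lemma: if for every `M > 0` there are an integer `R > 0` and a
potential `ψ` with `ψ ≥ M` on the sphere of radius `R` about `o` (graph distance
`d(o,v) = inf{n : p^n(o,v) > 0}`), then there exists a potential tending to infinity. -/
theorem potential_tending_to_infinity_of_spheres {V : Type*} (N : Network V)
    (hrec : N.Recurrent) (o : V)
    (hyp : ∀ M : ℝ, 0 < M → ∃ R : ℕ, 0 < R ∧ ∃ ψ : V → ℝ, N.IsPotential o ψ ∧
      ∀ v : V, sInf {n : ℕ | 0 < N.pstep n o v} = R → M ≤ ψ v) :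
    ∃ h : V → ℝ, N.IsPotential o h ∧ ∀ M : ℝ, 0 < M → {v : V | h v ≤ M}.Finite := by
  choose R hR ψ hψ hsph using fun n : ℕ => hyp (2 * 4 ^ n) (by positivity)
  have hw : HasSum (fun n : ℕ => 1 / 2 / 2 ^ n) (1 : ℝ) := hasSum_geometric_two' 1
  have hw0 : ∀ n : ℕ, (0 : ℝ) ≤ 1 / 2 / 2 ^ n := fun n => by positivity
  refine ⟨_, N.isPotential_tsum hw hw0 hψ, fun M _ => ?_⟩
  obtain ⟨n, hn⟩ := pow_unbounded_of_one_lt M one_lt_two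
  refine (N.finite_setOf_graphDist_le o (R n)).subset fun v hv => ?_
  by_contra hfar
  have hψn : 2 * 4 ^ n ≤ ψ n v :=
    N.le_of_le_on_sphere hrec (hψ n) (hR n) (hsph n) (not_le.1 hfar).le
  have hlarge : (2 : ℝ) ^ n ≤ ∑' m, 1 / 2 / 2 ^ m * ψ m v :=
    calc (2 : ℝ) ^ n = 1 / 2 / 2 ^ n * (2 * 4 ^ n) := by
          rw [show (4 : ℝ) = 2 * 2 by norm_num, mul_pow]; field_simp
      _ ≤ 1 / 2 / 2 ^ n * ψ n v := mul_le_mul_of_nonneg_left hψn (hw0 n)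
      _ ≤ ∑' m, 1 / 2 / 2 ^ m * ψ m v :=
          (N.summable_mul_isPotential hw.summable hw0 hψ v).le_tsum n
            fun m _ => mul_nonneg (hw0 m) ((hψ m).1 v)
  exact (not_le.2 (hn.trans_le hlarge)) hv
end
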